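/- arXiv:2303.08059 — 6 statements merged into one kernel-verified Lean document; each statement's English description precedes it below -/
import Mathlib

section
/- For any policy π in a finite episodic MDP, the trajectory entropy and visitation entropy satisfy TE(qᵖ) ≤ VE(dᵖ) ≤ H · TE(qᵖ). Moreover VE(dᵖ) − TE(qᵖ) = KL(qᵖ, ⊗_{h=1}^H dᵖ_h), the KL divergence between the trajectory distribution and the product of its step-marginals. -/
open Real Finset

/-- Shannon entropy of a finite distribution. -/
noncomputable def entropy {X : Type*} [Fintype X] (d : X → ℝ) : ℝ :=
  -∑ x, d x * Real.log (d x)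

/-- Kullback–Leibler divergence between finite distributions. -/
noncomputable def klDiv {X : Type*} [Fintype X] (p q : X → ℝ) : ℝ :=
  ∑ x, p x * Real.log (p x / q x)

/-- Trajectory distribution of a Markovian policy `pol` in an episodic MDP with horizon `H`,
transitions `p` and initial state `s1` (steps indexed `0, …, H-1`):
`qᵖ(m) = 1{s₀ = s₁} ∏_h π_h(a_h|s_h) ∏_{h+1<H} p_h(s_{h+1}|s_h,a_h)`. -/
noncomputable def trajDist {S A : Type*} [Fintype S] [Fintype A] [DecidableEq S]
    (H : ℕ) [NeZero H] (p : ℕ → S → A → S → ℝ) (pol : ℕ → S → A → ℝ) (s1 : S)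
    (m : Fin H → S × A) : ℝ :=
  (if (m 0).1 = s1 then (1 : ℝ) else 0)
    * (∏ h : Fin H, pol h (m h).1 (m h).2)
    * ∏ h : Fin H, (if hlt : (h : ℕ) + 1 < H then p h (m h).1 (m h).2 (m ⟨h + 1, hlt⟩).1 else 1)

/-- Visitation distribution at step `h`: the marginal of the trajectory distribution. -/
noncomputable def visitDist {S A : Type*} [Fintype S] [Fintype A] [DecidableEq S] [DecidableEq A]
    (H : ℕ) [NeZero H] (p : ℕ → S → A → S → ℝ) (pol : ℕ → S → A → ℝ) (s1 : S)
    (h : Fin H) (sa : S × A) : ℝ :=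
  ∑ m : Fin H → S × A, if m h = sa then trajDist H p pol s1 m else 0

/-! The visitation distribution `d_h` is the image of the trajectory distribution `q` under
`m ↦ m_h`, and merging outcomes cannot increase entropy, so `H(d_h) ≤ H(q)` for every `h`.
Since `log ∏_h d_h(m_h)` splits as `∑_h log d_h(m_h)`, the difference `∑_h H(d_h) - H(q)` is
`KL(q, ⊗_h d_h)`, which is nonnegative by Gibbs' inequality because `⊗_h d_h` is again a
probability distribution. The only input from the MDP is that `q` is a probability distribution,
which follows by summing out the last step of the underlying Markov chain on `S × A`. -/

theorem sub_le_mul_log_div {a b : ℝ} (ha : 0 ≤ a) (hb : 0 ≤ b) (hab : 0 < a → 0 < b) :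
    a - b ≤ a * log (a / b) := by
  rcases ha.eq_or_lt with rfl | ha_pos
  · simpa using hb
  have key := one_sub_inv_le_log_of_pos (div_pos ha_pos (hab ha_pos))
  rw [inv_div] at key
  calc a - b = a * (1 - b / a) := by field_simp
    _ ≤ a * log (a / b) := mul_le_mul_of_nonneg_left key ha

theorem klDiv_nonneg {Ω : Type*} [Fintype Ω] {q r : Ω → ℝ} (hq : 0 ≤ q) (hr : 0 ≤ r)
    (hqr : ∀ ω, 0 < q ω → 0 < r ω) (hsum : ∑ ω, r ω ≤ ∑ ω, q ω) : 0 ≤ klDiv q r := by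
  have := sum_le_sum fun ω (_ : ω ∈ univ) => sub_le_mul_log_div (hq ω) (hr ω) (hqr ω)
  rw [sum_sub_distrib] at this
  exact (sub_nonneg.2 hsum).trans this

section Marginal

variable {Ω X : Type*} [Fintype Ω] [DecidableEq X]

noncomputable def marginal (f : Ω → X) (q : Ω → ℝ) (x : X) : ℝ :=
  ∑ ω, if f ω = x then q ω else 0

variable {f : Ω → X} {q : Ω → ℝ}

theorem marginal_nonneg (hq : 0 ≤ q) : 0 ≤ marginal f q := fun _ =>
  sum_nonneg fun ω _ => by split_ifs; exacts [hq ω, le_rfl]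

theorem le_marginal_apply (hq : 0 ≤ q) (ω : Ω) : q ω ≤ marginal f q (f ω) := by
  simpa [marginal] using single_le_sum (f := fun ω' => if f ω' = f ω then q ω' else 0)
    (fun ω' _ => by split_ifs; exacts [hq ω', le_rfl]) (mem_univ ω)

variable [Fintype X]

theorem sum_marginal_mul (g : X → ℝ) : ∑ x, marginal f q x * g x = ∑ ω, q ω * g (f ω) := by
  simp only [marginal, sum_mul, ite_mul, zero_mul]
  rw [sum_comm]
  simp

theorem sum_marginal : ∑ x, marginal f q x = ∑ ω, q ω := by
  simpa using sum_marginal_mul (f := f) (q := q) 1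

theorem entropy_marginal_le (hq : 0 ≤ q) : entropy (marginal f q) ≤ entropy q := by
  rw [entropy, entropy, neg_le_neg_iff, sum_marginal_mul]
  refine sum_le_sum fun ω _ => ?_
  rcases (hq ω).eq_or_lt with h0 | hpos
  · simp [← h0]
  · exact mul_le_mul_of_nonneg_left (log_le_log hpos (le_marginal_apply hq ω)) hpos.le

end Marginal

section ProductOfMarginals

variable {ι X : Type*} [Fintype ι] [DecidableEq ι] [Fintype X] [DecidableEq X] {q : (ι → X) → ℝ}

theorem klDiv_prod_marginal (hq : 0 ≤ q) :
    klDiv q (fun m => ∏ i, marginal (fun m => m i) q (m i)) =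
      ∑ i, entropy (marginal (fun m => m i) q) - entropy q := by
  have pointwise : ∀ m, q m * log (q m / ∏ i, marginal (fun m => m i) q (m i)) =
      q m * log (q m) - ∑ i, q m * log (marginal (fun m => m i) q (m i)) := fun m => by
    rcases (hq m).eq_or_lt with h0 | hpos
    · simp [← h0]
    have hd : ∀ i, 0 < marginal (fun m => m i) q (m i) :=
      fun i => hpos.trans_le (le_marginal_apply hq m)
    rw [log_div hpos.ne' (prod_pos fun i _ => hd i).ne', log_prod fun i _ => (hd i).ne',
      mul_sub, mul_sum]
  simp only [klDiv, entropy, pointwise, sum_sub_distrib, sum_marginal_mul]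
  rw [sum_comm]
  simp only [sum_neg_distrib]
  ring

theorem entropy_le_sum_entropy_marginal (hq : 0 ≤ q) (hq1 : ∑ m, q m = 1) :
    entropy q ≤ ∑ i, entropy (marginal (fun m => m i) q) := by
  have hprod : ∑ m : ι → X, ∏ i, marginal (fun m => m i) q (m i) = ∑ m, q m := by
    simp [← Fintype.prod_sum, sum_marginal, hq1]
  have := klDiv_nonneg hq (fun m => prod_nonneg fun i _ => marginal_nonneg hq (m i))
    (fun m hm => prod_pos fun i _ => hm.trans_le (le_marginal_apply hq m)) hprod.le
  rw [klDiv_prod_marginal hq] at this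
  linarith

theorem sum_entropy_marginal_le (hq : 0 ≤ q) :
    ∑ i, entropy (marginal (fun m => m i) q) ≤ Fintype.card ι * entropy q := by
  simpa using sum_le_sum fun i (_ : i ∈ univ) => entropy_marginal_le (f := fun m => m i) hq

end ProductOfMarginals

section MarkovChain

variable {X : Type*}

noncomputable def markovPathWeight (w : X → ℝ) (k : ℕ → X → X → ℝ) {n : ℕ} (x : Fin (n + 1) → X) :
    ℝ :=
  w (x 0) * ∏ i : Fin n, k i (x i.castSucc) (x i.succ)

theorem sum_markovPathWeight [Fintype X] (k : ℕ → X → X → ℝ) (hk : ∀ i x, ∑ y, k i x y = 1)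
    (n : ℕ) (w : X → ℝ) : ∑ x : Fin (n + 1) → X, markovPathWeight w k x = ∑ x, w x := by
  induction n with
  | zero => simpa [markovPathWeight] using (Equiv.funUnique (Fin 1) X).sum_comp w
  | succ n ih =>
    rw [← ih, ← (Fin.snocEquiv fun _ => X).sum_comp, Fintype.sum_prod_type, sum_comm]
    refine sum_congr rfl fun x _ => ?_
    simp [markovPathWeight, Fin.prod_univ_castSucc, Fin.succ_castSucc, -Fin.castSucc_succ,
      ← mul_sum, hk]

end MarkovChain

section TrajectoryDistribution

variable {S A : Type*} [Fintype S] [Fintype A] [DecidableEq S]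

theorem trajDist_eq_markovPathWeight (n : ℕ) (p : ℕ → S → A → S → ℝ) (pol : ℕ → S → A → ℝ)
    (s1 : S) (m : Fin (n + 1) → S × A) :
    trajDist (n + 1) p pol s1 m =
      markovPathWeight (fun sa => (if sa.1 = s1 then 1 else 0) * pol 0 sa.1 sa.2)
        (fun h sa sa' => p h sa.1 sa.2 sa'.1 * pol (h + 1) sa'.1 sa'.2) m := by
  have transitions : ∏ h : Fin (n + 1), (if hlt : (h : ℕ) + 1 < n + 1 then
      p h (m h).1 (m h).2 (m ⟨h + 1, hlt⟩).1 else 1) =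
      ∏ i : Fin n, p i (m i.castSucc).1 (m i.castSucc).2 (m i.succ).1 := by
    simp [Fin.prod_univ_castSucc, Fin.succ]
  rw [trajDist, transitions, Fin.prod_univ_succ]
  simp only [markovPathWeight, Fin.val_succ, Fin.val_zero, prod_mul_distrib]
  ring

theorem trajDist_nonneg (H : ℕ) [NeZero H] {p : ℕ → S → A → S → ℝ} {pol : ℕ → S → A → ℝ}
    (s1 : S) (hp0 : ∀ h s a s', 0 ≤ p h s a s') (hpol0 : ∀ h s a, 0 ≤ pol h s a) :
    0 ≤ trajDist H p pol s1 := fun m => by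
  unfold trajDist
  refine mul_nonneg (mul_nonneg ?_ (prod_nonneg fun h _ => hpol0 ..)) (prod_nonneg fun h _ => ?_)
  · split_ifs <;> norm_num
  · split_ifs
    exacts [hp0 .., zero_le_one]

theorem sum_trajDist (H : ℕ) [NeZero H] {p : ℕ → S → A → S → ℝ} {pol : ℕ → S → A → ℝ}
    (s1 : S) (hp1 : ∀ h s a, ∑ s', p h s a s' = 1) (hpol1 : ∀ h s, ∑ a, pol h s a = 1) :
    ∑ m, trajDist H p pol s1 m = 1 := by
  obtain ⟨n, rfl⟩ : ∃ n, H = n + 1 := Nat.exists_eq_succ_of_ne_zero (NeZero.ne H)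
  simp_rw [trajDist_eq_markovPathWeight]
  rw [sum_markovPathWeight]
  · simp [Fintype.sum_prod_type, hpol1]
  · intro h sa
    simp [Fintype.sum_prod_type, ← mul_sum, hp1, hpol1]

end TrajectoryDistribution

/-- For any Markovian policy `π` in a finite episodic MDP, the trajectory entropy `TE(qᵖ)`
and the visitation entropy `VE(dᵖ) = Σ_h H(dᵖ_h)` satisfy
`TE(qᵖ) ≤ VE(dᵖ) ≤ H · TE(qᵖ)`, and moreover
`VE(dᵖ) − TE(qᵖ) = KL(qᵖ, ⊗_h dᵖ_h)`. -/
theorem trajectoryEntropy_le_visitationEntropy_le {S A : Type*}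
    [Fintype S] [Fintype A] [DecidableEq S] [DecidableEq A]
    (H : ℕ) [NeZero H] (p : ℕ → S → A → S → ℝ) (pol : ℕ → S → A → ℝ) (s1 : S)
    (hp0 : ∀ h s a s', 0 ≤ p h s a s') (hp1 : ∀ h s a, ∑ s', p h s a s' = 1)
    (hpol0 : ∀ h s a, 0 ≤ pol h s a) (hpol1 : ∀ h s, ∑ a, pol h s a = 1) :
    entropy (trajDist H p pol s1) ≤ ∑ h : Fin H, entropy (visitDist H p pol s1 h) ∧
    (∑ h : Fin H, entropy (visitDist H p pol s1 h)) ≤ H * entropy (trajDist H p pol s1) ∧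
    (∑ h : Fin H, entropy (visitDist H p pol s1 h)) - entropy (trajDist H p pol s1)
      = klDiv (trajDist H p pol s1) (fun m => ∏ h : Fin H, visitDist H p pol s1 h (m h)) := by
  have hq0 := trajDist_nonneg H s1 hp0 hpol0
  have hq1 := sum_trajDist H s1 hp1 hpol1
  have visitDist_eq :
      visitDist H p pol s1 = fun h => marginal (fun m => m h) (trajDist H p pol s1) := rfl
  rw [visitDist_eq]
  refine ⟨entropy_le_sum_entropy_marginal hq0 hq1, ?_, (klDiv_prod_marginal hq0).symm⟩
  simpa using sum_entropy_marginal_le (ι := Fin H) hq0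
end

section
/- (Policy error via smoothness) Let Φ: Δ_A → ℝ be 1-strongly convex with respect to a norm ‖·‖ whose dual satisfies ‖·‖_* ≤ r_A‖·‖_∞, let λ > 0, and let π be the greedy policy with respect to an arbitrary Q-function Ũ: π_h(s) = argmax_{π'∈Δ_A}{π'Ũ_h(s) − λΦ(π')}. Then the suboptimality of π in the λ-regularized MDP is bounded by V*_{λ,1}(s₁) − V^π_{λ,1}(s₁) ≤ (r_A²/(2λ)) · E_π[ Σ_{h=1}^H max_{a∈A} (Ũ_h(s_h,a) − Q*_{λ,h}(s_h,a))² | s₁ ]. -/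
open Real Finset

/-- Probability (under policy `pol` and transitions `p`) of the trajectory `τ` on steps
`h, …, H-1`, conditioned on `s_h = s` (steps are indexed `0, …, H-1`). -/
noncomputable def condProb {S A : Type*} [Fintype S] [Fintype A] [DecidableEq S]
    (H : ℕ) (p : ℕ → S → A → S → ℝ) (pol : ℕ → S → A → ℝ)
    (h : ℕ) (s : S) (τ : Fin H → S × A) : ℝ :=
  (if hh : h < H then (if (τ ⟨h, hh⟩).1 = s then (1 : ℝ) else 0) else 0)
    * ∏ k : Fin H,
        (if h ≤ (k : ℕ) then
          pol k (τ k).1 (τ k).2 *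
            (if hlt : (k : ℕ) + 1 < H then p k (τ k).1 (τ k).2 (τ ⟨k + 1, hlt⟩).1 else 1)
        else 1)

noncomputable def Wrec {S A : Type*} [Fintype S] [Fintype A]
    (p : ℕ → S → A → S → ℝ) (pol : ℕ → S → A → ℝ) (g : ℕ → S → ℝ) :
    ℕ → ℕ → S → ℝ
  | 0, _, _ => 0
  | (n+1), h, s => g h s + ∑ a, pol h s a * ∑ s', p h s a s' * Wrec p pol g n (h+1) s'

lemma sum_split {β : Type*} [Fintype β] [DecidableEq β] {H : ℕ} (j : Fin H)
    (Af : β → ℝ) (B : (Fin H → β) → ℝ)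
    (hB : ∀ τ b, B (Function.update τ j b) = B τ) :
    (Fintype.card β : ℝ) * ∑ τ : Fin H → β, Af (τ j) * B τ
      = (∑ b, Af b) * ∑ τ : Fin H → β, B τ := by
  have hinv : Function.Involutive
      (fun x : β × (Fin H → β) => (x.2 j, Function.update x.2 j x.1)) := by
    rintro ⟨b, τ⟩
    simp [Function.update_idem, Function.update_eq_self]
  have key := Equiv.sum_comp hinv.toPerm (fun x : β × (Fin H → β) => Af x.1 * B x.2)
  simp only [Function.Involutive.coe_toPerm] at key
  have key2 : ∑ x : β × (Fin H → β), Af (x.2 j) * B x.2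
      = ∑ x : β × (Fin H → β), Af x.1 * B x.2 := by
    rw [← key]
    apply Finset.sum_congr rfl
    rintro ⟨b, τ⟩ _
    simp only
    rw [hB]
  rw [Fintype.sum_prod_type, Fintype.sum_prod_type] at key2
  have l1 : ∑ _b : β, ∑ τ : Fin H → β, Af (τ j) * B τ
      = (Fintype.card β : ℝ) * ∑ τ : Fin H → β, Af (τ j) * B τ := by
    rw [Finset.sum_const, nsmul_eq_mul, Finset.card_univ]
  have l2 : ∑ b : β, ∑ τ : Fin H → β, Af b * B τ
      = (∑ b, Af b) * ∑ τ : Fin H → β, B τ := by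
    rw [Finset.sum_mul]
    apply Finset.sum_congr rfl
    intro b _
    rw [Finset.mul_sum]
  rw [← l1, key2, l2]

lemma condProb_congr {S A : Type*} [Fintype S] [Fintype A] [DecidableEq S]
    (H : ℕ) (p : ℕ → S → A → S → ℝ) (pol : ℕ → S → A → ℝ) (h : ℕ) (s : S)
    (τ τ' : Fin H → S × A) (hag : ∀ k : Fin H, h ≤ (k : ℕ) → τ k = τ' k) :
    condProb H p pol h s τ = condProb H p pol h s τ' := by
  unfold condProb
  congr 1
  · by_cases hh : h < H
    · rw [dif_pos hh, dif_pos hh, hag ⟨h, hh⟩ le_rfl]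
    · rw [dif_neg hh, dif_neg hh]
  · apply Finset.prod_congr rfl
    intro k _
    by_cases hk : h ≤ (k : ℕ)
    · rw [if_pos hk, if_pos hk, hag k hk]
      by_cases hlt : (k : ℕ) + 1 < H
      · rw [dif_pos hlt, dif_pos hlt, hag ⟨(k : ℕ) + 1, hlt⟩ (le_trans hk (Nat.le_succ _))]
      · rw [dif_neg hlt, dif_neg hlt]
    · rw [if_neg hk, if_neg hk]

lemma condProb_lt {S A : Type*} [Fintype S] [Fintype A] [DecidableEq S]
    (H : ℕ) (p : ℕ → S → A → S → ℝ) (pol : ℕ → S → A → ℝ) (h : ℕ) (s : S)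
    (τ : Fin H → S × A) (hh : h < H) :
    condProb H p pol h s τ =
      (if (τ ⟨h, hh⟩).1 = s then (1 : ℝ) else 0) *
        (pol h (τ ⟨h, hh⟩).1 (τ ⟨h, hh⟩).2 *
          (if hlt : h + 1 < H then p h (τ ⟨h, hh⟩).1 (τ ⟨h, hh⟩).2 (τ ⟨h + 1, hlt⟩).1 else 1)) *
        ∏ k : Fin H,
          (if h + 1 ≤ (k : ℕ) then
            pol k (τ k).1 (τ k).2 *
              (if hlt : (k : ℕ) + 1 < H then p k (τ k).1 (τ k).2 (τ ⟨k + 1, hlt⟩).1 else 1)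
          else 1) := by
  unfold condProb
  rw [dif_pos hh, mul_assoc]
  congr 1
  set f : Fin H → ℝ := fun k =>
    (if h ≤ (k : ℕ) then
      pol k (τ k).1 (τ k).2 *
        (if hlt : (k : ℕ) + 1 < H then p k (τ k).1 (τ k).2 (τ ⟨k + 1, hlt⟩).1 else 1)
    else 1) with hf
  set f1 : Fin H → ℝ := fun k =>
    (if h + 1 ≤ (k : ℕ) then
      pol k (τ k).1 (τ k).2 *
        (if hlt : (k : ℕ) + 1 < H then p k (τ k).1 (τ k).2 (τ ⟨k + 1, hlt⟩).1 else 1)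
    else 1) with hf1
  have e1 : (∏ k : Fin H, f k) = f ⟨h, hh⟩ * ∏ k ∈ Finset.univ.erase ⟨h, hh⟩, f k :=
    (Finset.mul_prod_erase Finset.univ f (Finset.mem_univ _)).symm
  have e2 : (∏ k : Fin H, f1 k) = f1 ⟨h, hh⟩ * ∏ k ∈ Finset.univ.erase ⟨h, hh⟩, f1 k :=
    (Finset.mul_prod_erase Finset.univ f1 (Finset.mem_univ _)).symm
  have e3 : (∏ k ∈ Finset.univ.erase ⟨h, hh⟩, f k) = ∏ k ∈ Finset.univ.erase ⟨h, hh⟩, f1 k := by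
    apply Finset.prod_congr rfl
    intro k hk
    have hkne : (k : ℕ) ≠ h := by
      intro hkk
      exact (Finset.mem_erase.mp hk).1 (Fin.ext hkk)
    rw [hf, hf1]
    by_cases hc : h + 1 ≤ (k : ℕ)
    · simp only [if_pos hc, if_pos (by omega : h ≤ (k : ℕ))]
    · simp only [if_neg hc, if_neg (by omega : ¬ h ≤ (k : ℕ))]
  have e4 : f ⟨h, hh⟩ = pol h (τ ⟨h, hh⟩).1 (τ ⟨h, hh⟩).2 *
      (if hlt : h + 1 < H then p h (τ ⟨h, hh⟩).1 (τ ⟨h, hh⟩).2 (τ ⟨h + 1, hlt⟩).1 else 1) := by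
    rw [hf]; simp only [if_pos (le_refl h)]
  have e5 : f1 ⟨h, hh⟩ = 1 := by
    rw [hf1]; simp only [if_neg (by omega : ¬ h + 1 ≤ h)]
  rw [e1, e2, e3, e4, e5, one_mul]

lemma sum_if_split {S A : Type*} (H : ℕ) (g : ℕ → S → ℝ) (h : ℕ)
    (τ : Fin H → S × A) (hh : h < H) :
    (∑ k : Fin H, if h ≤ (k : ℕ) then g k (τ k).1 else 0)
      = g h (τ ⟨h, hh⟩).1 + ∑ k : Fin H, if h + 1 ≤ (k : ℕ) then g k (τ k).1 else 0 := by
  set f : Fin H → ℝ := fun k => if h ≤ (k : ℕ) then g k (τ k).1 else 0 with hf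
  set f1 : Fin H → ℝ := fun k => if h + 1 ≤ (k : ℕ) then g k (τ k).1 else 0 with hf1
  have e1 : (∑ k : Fin H, f k) = f ⟨h, hh⟩ + ∑ k ∈ Finset.univ.erase ⟨h, hh⟩, f k :=
    (Finset.add_sum_erase Finset.univ f (Finset.mem_univ _)).symm
  have e2 : (∑ k : Fin H, f1 k) = f1 ⟨h, hh⟩ + ∑ k ∈ Finset.univ.erase ⟨h, hh⟩, f1 k :=
    (Finset.add_sum_erase Finset.univ f1 (Finset.mem_univ _)).symm
  have e3 : (∑ k ∈ Finset.univ.erase ⟨h, hh⟩, f k) = ∑ k ∈ Finset.univ.erase ⟨h, hh⟩, f1 k := by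
    apply Finset.sum_congr rfl
    intro k hk
    have hkne : (k : ℕ) ≠ h := by
      intro hkk
      exact (Finset.mem_erase.mp hk).1 (Fin.ext hkk)
    rw [hf, hf1]
    by_cases hc : h + 1 ≤ (k : ℕ)
    · simp only [if_pos hc, if_pos (by omega : h ≤ (k : ℕ))]
    · simp only [if_neg hc, if_neg (by omega : ¬ h ≤ (k : ℕ))]
  have e4 : f ⟨h, hh⟩ = g h (τ ⟨h, hh⟩).1 := by rw [hf]; simp
  have e5 : f1 ⟨h, hh⟩ = 0 := by
    rw [hf1]; simp only [if_neg (by omega : ¬ h + 1 ≤ h)]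
  rw [e1, e2, e3, e4, e5, zero_add]

lemma genE {S A : Type*} [Fintype S] [Fintype A] [DecidableEq S] [DecidableEq A]
    (H : ℕ) (p : ℕ → S → A → S → ℝ) (pol : ℕ → S → A → ℝ) (g : ℕ → S → ℝ)
    (hp1 : ∀ h s a, ∑ s', p h s a s' = 1)
    (hpol1 : ∀ h, h < H → ∀ s, ∑ a, pol h s a = 1) :
    ∀ n h s c, h + (n + 1) = H →
      ∑ τ : Fin H → S × A, condProb H p pol h s τ *
          (c + ∑ k : Fin H, if h ≤ (k : ℕ) then g k (τ k).1 else 0)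
        = (Fintype.card (S × A) : ℝ) ^ h * (c + Wrec p pol g (n + 1) h s) := by
  intro n
  induction n with
  | zero =>
    intro h s c hsum
    have hh : h < H := by omega
    have hA : Nonempty A := by
      by_contra hne
      have : Fintype.card A = 0 := by
        rw [Fintype.card_eq_zero_iff]; exact not_nonempty_iff.mp hne
      have h1 := hpol1 h hh s
      rw [Finset.sum_eq_zero (fun a _ => absurd (Nonempty.intro a) hne)] at h1
      norm_num at h1
    have hS : Nonempty S := ⟨s⟩
    have hK : (0 : ℝ) < (Fintype.card (S × A) : ℝ) := by
      have : 0 < Fintype.card (S × A) := Fintype.card_pos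
      exact_mod_cast this
    -- simplify each summand
    have hterm : ∀ τ : Fin H → S × A,
        condProb H p pol h s τ *
          (c + ∑ k : Fin H, if h ≤ (k : ℕ) then g k (τ k).1 else 0)
        = ((if (τ ⟨h, hh⟩).1 = s then (1 : ℝ) else 0) *
            pol h (τ ⟨h, hh⟩).1 (τ ⟨h, hh⟩).2 * (c + g h (τ ⟨h, hh⟩).1)) * 1 := by
      intro τ
      rw [condProb_lt H p pol h s τ hh, sum_if_split H g h τ hh]
      have hd : ¬ (h + 1 < H) := by omega
      rw [dif_neg hd]
      have hz : (∑ k : Fin H, if h + 1 ≤ (k : ℕ) then g k (τ k).1 else 0) = 0 := by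
        apply Finset.sum_eq_zero
        intro k _
        have : ¬ (h + 1 ≤ (k : ℕ)) := by omega
        rw [if_neg this]
      have hprod : (∏ k : Fin H,
          (if h + 1 ≤ (k : ℕ) then
            pol k (τ k).1 (τ k).2 *
              (if hlt : (k : ℕ) + 1 < H then p k (τ k).1 (τ k).2 (τ ⟨k + 1, hlt⟩).1 else 1)
          else 1)) = 1 := by
        apply Finset.prod_eq_one
        intro k _
        have : ¬ (h + 1 ≤ (k : ℕ)) := by omega
        rw [if_neg this]
      rw [hz, hprod]
      ring
    rw [Finset.sum_congr rfl (fun τ _ => hterm τ)]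
    have hsplit := sum_split (⟨h, hh⟩ : Fin H)
      (fun b : S × A => (if b.1 = s then (1 : ℝ) else 0) * pol h b.1 b.2 * (c + g h b.1))
      (fun _ => (1 : ℝ)) (fun τ b => rfl)
    -- hsplit : K * Σ_τ A (τ j) * 1 = (Σ_b A b) * Σ_τ 1
    have hAf : (∑ b : S × A, (if b.1 = s then (1 : ℝ) else 0) * pol h b.1 b.2 * (c + g h b.1))
        = c + g h s := by
      rw [Fintype.sum_prod_type]
      rw [Finset.sum_eq_single s]
      · have hptw : ∀ a : A, ((if s = s then (1:ℝ) else 0) * pol h s a * (c + g h s))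
            = pol h s a * (c + g h s) := by
          intro a; rw [if_pos rfl]; ring
        rw [Finset.sum_congr rfl (fun a _ => hptw a), ← Finset.sum_mul, hpol1 h hh s, one_mul]
      · intro s0 _ hne
        apply Finset.sum_eq_zero
        intro a _
        simp [hne]
      · intro hs; exact absurd (Finset.mem_univ s) hs
    have hcard : (∑ _τ : Fin H → S × A, (1 : ℝ)) = (Fintype.card (S × A) : ℝ) ^ H := by
      rw [Finset.sum_const, nsmul_eq_mul, Finset.card_univ, mul_one]
      rw [Fintype.card_fun]
      push_cast
      rw [Fintype.card_fin]
    rw [hAf, hcard] at hsplit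
    have hW : Wrec p pol g 1 h s = g h s := by
      show g h s + _ = g h s
      simp [Wrec]
    rw [hW]
    have hHh : H = h + 1 := by omega
    have : (Fintype.card (S × A) : ℝ) ^ H = (Fintype.card (S × A) : ℝ) ^ h * (Fintype.card (S × A) : ℝ) := by
      rw [hHh, pow_succ]
    rw [this] at hsplit
    -- hsplit : K * Σ = (c + g h s) * (K^h * K)
    apply mul_left_cancel₀ (ne_of_gt hK)
    rw [hsplit]; ring
  | succ n ih =>
    intro h s c hsum
    have hh : h < H := by omega
    have hlt : h + 1 < H := by omega
    have hA : Nonempty A := by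
      by_contra hne
      have h1 := hpol1 h hh s
      rw [Finset.sum_eq_zero (fun a _ => absurd (Nonempty.intro a) hne)] at h1
      norm_num at h1
    have hS : Nonempty S := ⟨s⟩
    have hK : (0 : ℝ) < (Fintype.card (S × A) : ℝ) := by
      have : 0 < Fintype.card (S × A) := Fintype.card_pos
      exact_mod_cast this
    have hterm : ∀ τ : Fin H → S × A,
        condProb H p pol h s τ *
          (c + ∑ k : Fin H, if h ≤ (k : ℕ) then g k (τ k).1 else 0)
        = ∑ s' : S,
            ((if (τ ⟨h, hh⟩).1 = s then (1 : ℝ) else 0) * pol h (τ ⟨h, hh⟩).1 (τ ⟨h, hh⟩).2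
                * p h (τ ⟨h, hh⟩).1 (τ ⟨h, hh⟩).2 s') *
              (condProb H p pol (h + 1) s' τ *
                ((c + g h s) + ∑ k : Fin H, if h + 1 ≤ (k : ℕ) then g k (τ k).1 else 0)) := by
      intro τ
      rw [condProb_lt H p pol h s τ hh, sum_if_split H g h τ hh]
      rw [dif_pos hlt]
      have hcp : ∀ s' : S, condProb H p pol (h + 1) s' τ
          = (if (τ ⟨h + 1, hlt⟩).1 = s' then (1 : ℝ) else 0) *
            ∏ k : Fin H,
              (if h + 1 ≤ (k : ℕ) then
                pol k (τ k).1 (τ k).2 *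
                  (if hlt2 : (k : ℕ) + 1 < H then p k (τ k).1 (τ k).2 (τ ⟨k + 1, hlt2⟩).1 else 1)
              else 1) := by
        intro s'
        unfold condProb
        rw [dif_pos hlt]
      simp only [hcp]
      rw [Finset.sum_eq_single (τ ⟨h + 1, hlt⟩).1]
      · by_cases hbs : (τ ⟨h, hh⟩).1 = s
        · rw [hbs]
          simp only [eq_self_iff_true, if_true]
          ring
        · rw [if_neg hbs]
          ring
      · intro s0 _ hne
        rw [if_neg (show ¬ (τ ⟨h + 1, hlt⟩).1 = s0 from fun hc => hne hc.symm)]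
        ring
      · intro hs0; exact absurd (Finset.mem_univ _) hs0
    rw [Finset.sum_congr rfl (fun τ _ => hterm τ), Finset.sum_comm]
    apply mul_left_cancel₀ (ne_of_gt hK)
    rw [Finset.mul_sum]
    have hsplit : ∀ s' : S,
        (Fintype.card (S × A) : ℝ) *
          ∑ τ : Fin H → S × A,
            ((if (τ ⟨h, hh⟩).1 = s then (1 : ℝ) else 0) * pol h (τ ⟨h, hh⟩).1 (τ ⟨h, hh⟩).2
                * p h (τ ⟨h, hh⟩).1 (τ ⟨h, hh⟩).2 s') *
              (condProb H p pol (h + 1) s' τ *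
                ((c + g h s) + ∑ k : Fin H, if h + 1 ≤ (k : ℕ) then g k (τ k).1 else 0))
        = (∑ a : A, pol h s a * p h s a s') *
            ((Fintype.card (S × A) : ℝ) ^ (h + 1) *
              ((c + g h s) + Wrec p pol g (n + 1) (h + 1) s')) := by
      intro s'
      have hB : ∀ (τ : Fin H → S × A) (b : S × A),
          (condProb H p pol (h + 1) s' (Function.update τ ⟨h, hh⟩ b) *
            ((c + g h s) + ∑ k : Fin H,
              if h + 1 ≤ (k : ℕ) then g k ((Function.update τ ⟨h, hh⟩ b) k).1 else 0))
          = (condProb H p pol (h + 1) s' τ *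
            ((c + g h s) + ∑ k : Fin H, if h + 1 ≤ (k : ℕ) then g k (τ k).1 else 0)) := by
        intro τ b
        have hne : ∀ k : Fin H, h + 1 ≤ (k : ℕ) → Function.update τ ⟨h, hh⟩ b k = τ k := by
          intro k hk
          apply Function.update_of_ne
          intro hkk
          rw [hkk] at hk
          have hk' : h + 1 ≤ h := by simpa using hk
          omega
        rw [condProb_congr H p pol (h + 1) s' _ τ hne]
        congr 2
        apply Finset.sum_congr rfl
        intro k _
        by_cases hk : h + 1 ≤ (k : ℕ)
        · rw [if_pos hk, if_pos hk, hne k hk]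
        · rw [if_neg hk, if_neg hk]
      have := sum_split (⟨h, hh⟩ : Fin H)
        (fun b : S × A => (if b.1 = s then (1 : ℝ) else 0) * pol h b.1 b.2 * p h b.1 b.2 s')
        (fun τ : Fin H → S × A => condProb H p pol (h + 1) s' τ *
          ((c + g h s) + ∑ k : Fin H, if h + 1 ≤ (k : ℕ) then g k (τ k).1 else 0))
        hB
      rw [this]
      have hAf : (∑ b : S × A,
          (if b.1 = s then (1 : ℝ) else 0) * pol h b.1 b.2 * p h b.1 b.2 s')
          = ∑ a : A, pol h s a * p h s a s' := by
        rw [Fintype.sum_prod_type]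
        rw [Finset.sum_eq_single s]
        · apply Finset.sum_congr rfl
          intro a _
          rw [if_pos rfl]; ring
        · intro s0 _ hne
          apply Finset.sum_eq_zero
          intro a _
          rw [if_neg hne]; ring
        · intro hs0; exact absurd (Finset.mem_univ _) hs0
      rw [hAf, ih (h + 1) s' (c + g h s) (by omega)]
    rw [Finset.sum_congr rfl (fun s' _ => hsplit s')]
    have m1 : (∑ s' : S, ∑ a : A, pol h s a * p h s a s') = 1 := by
      rw [Finset.sum_comm]
      have hx : ∀ a : A, (∑ s' : S, pol h s a * p h s a s') = pol h s a := by
        intro a; rw [← Finset.mul_sum, hp1, mul_one]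
      rw [Finset.sum_congr rfl (fun a _ => hx a), hpol1 h hh s]
    have m2 : (∑ s' : S, ∑ a : A, pol h s a * p h s a s' * Wrec p pol g (n + 1) (h + 1) s')
        = ∑ a : A, pol h s a * ∑ s' : S, p h s a s' * Wrec p pol g (n + 1) (h + 1) s' := by
      rw [Finset.sum_comm]
      apply Finset.sum_congr rfl
      intro a _
      rw [Finset.mul_sum]
      apply Finset.sum_congr rfl
      intro s' _
      ring
    have expand : ∀ s' : S,
        (∑ a : A, pol h s a * p h s a s') *
            ((Fintype.card (S × A) : ℝ) ^ (h + 1) *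
              ((c + g h s) + Wrec p pol g (n + 1) (h + 1) s'))
        = (Fintype.card (S × A) : ℝ) ^ (h + 1) *
            ((∑ a : A, pol h s a * p h s a s') * (c + g h s)
              + ∑ a : A, pol h s a * p h s a s' * Wrec p pol g (n + 1) (h + 1) s') := by
      intro s'
      rw [← Finset.sum_mul]
      ring
    rw [Finset.sum_congr rfl (fun s' _ => expand s'), ← Finset.mul_sum,
      Finset.sum_add_distrib, ← Finset.sum_mul, m1, m2, one_mul]
    show _ = (Fintype.card (S × A) : ℝ) * ((Fintype.card (S × A) : ℝ) ^ h *
      (c + (g h s + ∑ a : A, pol h s a * ∑ s' : S, p h s a s' * Wrec p pol g (n + 1) (h + 1) s')))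
    rw [pow_succ]
    ring

lemma key_smooth {A : Type*} [Fintype A] [Nonempty A]
    (Phi : (A → ℝ) → ℝ) (N : (A → ℝ) → ℝ) (rA lam : ℝ)
    (u x pi qs : A → ℝ)
    (hlam : 0 < lam) (hrA : 0 < rA)
    (hstrong : ∀ q ∈ stdSimplex ℝ A, ∀ q' ∈ stdSimplex ℝ A, ∀ t ∈ Set.Icc (0 : ℝ) 1,
      Phi (t • q + (1 - t) • q')
        ≤ t * Phi q + (1 - t) * Phi q' - t * (1 - t) / 2 * (N (q - q')) ^ 2)
    (hdual : ∀ xv yv : A → ℝ, (∑ a, xv a * yv a) ≤ rA * (⨆ a, |xv a|) * N yv)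
    (hqs : qs ∈ stdSimplex ℝ A) (hpi : pi ∈ stdSimplex ℝ A)
    (hgreedy : ∀ q ∈ stdSimplex ℝ A,
      (∑ a, q a * u a) - lam * Phi q ≤ (∑ a, pi a * u a) - lam * Phi pi) :
    ((∑ a, qs a * x a) - lam * Phi qs) - ((∑ a, pi a * x a) - lam * Phi pi)
      ≤ rA ^ 2 / (2 * lam) * (⨆ a, |x a - u a|) ^ 2 := by
  set D : ℝ := ((∑ a, qs a * u a) - lam * Phi qs) - ((∑ a, pi a * u a) - lam * Phi pi) with hD
  set nn : ℝ := N (qs - pi) with hnn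
  -- refined greedy inequality
  have hstep : ∀ t ∈ Set.Ioc (0 : ℝ) 1, D + lam / 2 * nn ^ 2 ≤ t * (lam / 2 * nn ^ 2) := by
    intro t ht
    have ht0 : 0 < t := ht.1
    have ht1 : t ≤ 1 := ht.2
    have hmix : t • qs + (1 - t) • pi ∈ stdSimplex ℝ A :=
      (convex_stdSimplex ℝ A) hqs hpi (le_of_lt ht0) (by linarith) (by ring)
    have hgr := hgreedy _ hmix
    have hlin : (∑ a, (t • qs + (1 - t) • pi) a * u a)
        = t * (∑ a, qs a * u a) + (1 - t) * (∑ a, pi a * u a) := by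
      rw [Finset.mul_sum, Finset.mul_sum, ← Finset.sum_add_distrib]
      apply Finset.sum_congr rfl
      intro a _
      simp only [Pi.add_apply, Pi.smul_apply, smul_eq_mul]
      ring
    have hst := hstrong qs hqs pi hpi t ⟨le_of_lt ht0, ht1⟩
    rw [hlin] at hgr
    have hkey : t * (D + lam / 2 * nn ^ 2 - t * (lam / 2 * nn ^ 2)) ≤ 0 := by
      have hmono : lam * Phi (t • qs + (1 - t) • pi)
          ≤ lam * (t * Phi qs + (1 - t) * Phi pi - t * (1 - t) / 2 * nn ^ 2) :=
        mul_le_mul_of_nonneg_left hst (le_of_lt hlam)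
      nlinarith [hgr, hmono]
    have hfin : D + lam / 2 * nn ^ 2 - t * (lam / 2 * nn ^ 2) ≤ 0 := by
      by_contra hpos
      push_neg at hpos
      nlinarith
    linarith
  have hD2 : D + lam / 2 * nn ^ 2 ≤ 0 := by
    have hc : 0 ≤ lam / 2 * nn ^ 2 := by positivity
    rcases eq_or_lt_of_le hc with hc0 | hc0
    · have := hstep 1 ⟨one_pos, le_refl 1⟩
      rw [← hc0] at this ⊢
      simpa using this
    · have : ∀ ε : ℝ, 0 < ε → D + lam / 2 * nn ^ 2 ≤ 0 + ε := by
        intro ε hε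
        set t : ℝ := min 1 (ε / (lam / 2 * nn ^ 2)) with htdef
        have ht : t ∈ Set.Ioc (0 : ℝ) 1 := by
          constructor
          · apply lt_min one_pos
            positivity
          · exact min_le_left _ _
        calc D + lam / 2 * nn ^ 2 ≤ t * (lam / 2 * nn ^ 2) := hstep t ht
          _ ≤ (ε / (lam / 2 * nn ^ 2)) * (lam / 2 * nn ^ 2) :=
              mul_le_mul_of_nonneg_right (min_le_right _ _) hc
          _ = ε := div_mul_cancel₀ ε (ne_of_gt hc0)
          _ = 0 + ε := (zero_add ε).symm
      exact le_of_forall_pos_le_add this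
  -- decomposition
  set m : ℝ := ⨆ a, |x a - u a| with hm
  have hdec : ((∑ a, qs a * x a) - lam * Phi qs) - ((∑ a, pi a * x a) - lam * Phi pi)
      = D + ∑ a, (x a - u a) * ((qs - pi) a) := by
    rw [hD]
    have : (∑ a, (x a - u a) * ((qs - pi) a))
        = ((∑ a, qs a * x a) - (∑ a, pi a * x a))
          - ((∑ a, qs a * u a) - (∑ a, pi a * u a)) := by
      rw [← Finset.sum_sub_distrib, ← Finset.sum_sub_distrib, ← Finset.sum_sub_distrib]
      apply Finset.sum_congr rfl
      intro a _
      simp only [Pi.sub_apply]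
      ring
    rw [this]
    ring
  have hdual' : (∑ a, (x a - u a) * ((qs - pi) a)) ≤ rA * m * nn := by
    have := hdual (fun a => x a - u a) (qs - pi)
    simpa [hm, hnn] using this
  have hm0 : 0 ≤ m := by
    have hbdd : BddAbove (Set.range fun a => |x a - u a|) :=
      Set.Finite.bddAbove (Set.finite_range _)
    obtain ⟨a0⟩ := (inferInstance : Nonempty A)
    exact le_trans (abs_nonneg _) (le_ciSup hbdd a0)
  rw [hdec]
  rw [div_mul_eq_mul_div, le_div_iff₀ (by positivity : (0:ℝ) < 2 * lam)]
  nlinarith [hD2, hdual', sq_nonneg (lam * nn - rA * m), sq_nonneg m, sq_nonneg nn]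

lemma sup_abs_sq_le {A : Type*} [Fintype A] [Nonempty A] (x u : A → ℝ) :
    (⨆ a, |x a - u a|) ^ 2 ≤ ⨆ a, (u a - x a) ^ 2 := by
  obtain ⟨a0, ha0⟩ := Finite.exists_max (fun a => |x a - u a|)
  have hbdd : BddAbove (Set.range fun a => |x a - u a|) :=
    Set.Finite.bddAbove (Set.finite_range _)
  have hbdd2 : BddAbove (Set.range fun a => (u a - x a) ^ 2) :=
    Set.Finite.bddAbove (Set.finite_range _)
  have heq : (⨆ a, |x a - u a|) = |x a0 - u a0| :=
    le_antisymm (ciSup_le ha0) (le_ciSup hbdd a0)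
  rw [heq]
  have h2 : |x a0 - u a0| ^ 2 = (u a0 - x a0) ^ 2 := by
    rw [sq_abs]; ring
  rw [h2]
  exact le_ciSup hbdd2 a0

/-- Policy error via smoothness: if `Φ` is `1`-strongly convex on the simplex with respect to
a norm `N` whose dual is dominated by `r_A ‖·‖_∞`, `λ > 0`, and `pol` is the greedy policy
with respect to an arbitrary Q-function `U`, then the suboptimality of `pol` in the
`λ`-regularized MDP is bounded by
`V*_{λ,0}(s₁) − V^π_{λ,0}(s₁) ≤ (r_A²/(2λ)) E_π[Σ_h max_a (U_h(s_h,a) − Q*_{λ,h}(s_h,a))² | s₁]`.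
Steps are indexed `0, …, H-1`. -/
theorem policy_error_via_smoothness {S A : Type*}
    [Fintype S] [Fintype A] [DecidableEq S] [DecidableEq A] [Nonempty A]
    (H : ℕ) (p : ℕ → S → A → S → ℝ) (r : ℕ → S → A → ℝ) (s1 : S)
    (Phi : (A → ℝ) → ℝ) (N : (A → ℝ) → ℝ) (rA lam : ℝ)
    (U Qstar Qpi : ℕ → S → A → ℝ) (Vstar Vpi : ℕ → S → ℝ) (pol : ℕ → S → A → ℝ)
    (hlam : 0 < lam) (hrA : 0 < rA)
    (hp0 : ∀ h s a s', 0 ≤ p h s a s') (hp1 : ∀ h s a, ∑ s', p h s a s' = 1)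
    -- `Φ` is 1-strongly convex w.r.t. the norm `N` on the simplex
    (hstrong : ∀ q ∈ stdSimplex ℝ A, ∀ q' ∈ stdSimplex ℝ A, ∀ t ∈ Set.Icc (0 : ℝ) 1,
      Phi (t • q + (1 - t) • q')
        ≤ t * Phi q + (1 - t) * Phi q' - t * (1 - t) / 2 * (N (q - q')) ^ 2)
    -- the dual norm of `N` is dominated by `r_A ‖·‖_∞`
    (hdual : ∀ x y : A → ℝ, (∑ a, x a * y a) ≤ rA * (⨆ a, |x a|) * N y)
    -- optimal regularized Bellman equations
    (hVstarH : ∀ s, Vstar H s = 0)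
    (hQstar : ∀ h < H, ∀ s a, Qstar h s a = r h s a + ∑ s', p h s a s' * Vstar (h + 1) s')
    (hVstar : ∀ h < H, ∀ s,
      IsGreatest {v : ℝ | ∃ q ∈ stdSimplex ℝ A, v = (∑ a, q a * Qstar h s a) - lam * Phi q}
        (Vstar h s))
    -- `pol` is the greedy policy with respect to `U`
    (hpolmem : ∀ h < H, ∀ s, (fun a => pol h s a) ∈ stdSimplex ℝ A)
    (hgreedy : ∀ h < H, ∀ s, ∀ q ∈ stdSimplex ℝ A,
      (∑ a, q a * U h s a) - lam * Phi q
        ≤ (∑ a, pol h s a * U h s a) - lam * Phi (fun a => pol h s a))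
    -- regularized Bellman equations for `pol`
    (hVpiH : ∀ s, Vpi H s = 0)
    (hQpi : ∀ h < H, ∀ s a, Qpi h s a = r h s a + ∑ s', p h s a s' * Vpi (h + 1) s')
    (hVpi : ∀ h < H, ∀ s,
      Vpi h s = (∑ a, pol h s a * Qpi h s a) - lam * Phi (fun a => pol h s a)) :
    Vstar 0 s1 - Vpi 0 s1 ≤
      rA ^ 2 / (2 * lam) *
        ∑ τ : Fin H → S × A, condProb H p pol 0 s1 τ *
          ∑ k : Fin H, ⨆ a, (U k (τ k).1 a - Qstar k (τ k).1 a) ^ 2 := by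
  set g : ℕ → S → ℝ := fun h' s' => ⨆ a, (U h' s' a - Qstar h' s' a) ^ 2 with hg
  have hC : (0 : ℝ) ≤ rA ^ 2 / (2 * lam) := by positivity
  have main : ∀ n h s, h + n = H →
      Vstar h s - Vpi h s ≤ rA ^ 2 / (2 * lam) * Wrec p pol g n h s := by
    intro n
    induction n with
    | zero =>
      intro h s hsum
      have hhH : h = H := by omega
      subst hhH
      rw [hVstarH s, hVpiH s]
      simp [Wrec]
    | succ n ih =>
      intro h s hsum
      have hh : h < H := by omega
      obtain ⟨⟨qs, hqsmem, hqseq⟩, _⟩ := hVstar h hh s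
      have hkey := key_smooth Phi N rA lam (U h s) (Qstar h s) (fun a => pol h s a) qs
        hlam hrA hstrong hdual hqsmem (hpolmem h hh s) (hgreedy h hh s)
      have hsup : (⨆ a, |Qstar h s a - U h s a|) ^ 2 ≤ g h s :=
        sup_abs_sq_le (Qstar h s) (U h s)
      have h2 : Vpi h s = (∑ a, pol h s a * Qpi h s a) - lam * Phi (fun a => pol h s a) :=
        hVpi h hh s
      have h3 : ∀ a, Qstar h s a - Qpi h s a
          = ∑ s', p h s a s' * (Vstar (h + 1) s' - Vpi (h + 1) s') := by
        intro a
        rw [hQstar h hh s a, hQpi h hh s a]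
        have e : (∑ s', p h s a s' * (Vstar (h + 1) s' - Vpi (h + 1) s'))
            = (∑ s', p h s a s' * Vstar (h + 1) s') - ∑ s', p h s a s' * Vpi (h + 1) s' := by
          rw [← Finset.sum_sub_distrib]
          apply Finset.sum_congr rfl
          intro s' _
          ring
        rw [e]
        ring
      have h5 : Vstar h s - Vpi h s ≤ rA ^ 2 / (2 * lam) * g h s
          + ∑ a, pol h s a * (Qstar h s a - Qpi h s a) := by
        have e : (∑ a, pol h s a * (Qstar h s a - Qpi h s a))
            = (∑ a, pol h s a * Qstar h s a) - ∑ a, pol h s a * Qpi h s a := by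
          rw [← Finset.sum_sub_distrib]
          apply Finset.sum_congr rfl
          intro a _
          ring
        rw [e, h2]
        have hCs : rA ^ 2 / (2 * lam) * (⨆ a, |Qstar h s a - U h s a|) ^ 2
            ≤ rA ^ 2 / (2 * lam) * g h s := mul_le_mul_of_nonneg_left hsup hC
        linarith [hkey, hCs, hqseq]
      have h6 : (∑ a, pol h s a * (Qstar h s a - Qpi h s a))
          ≤ ∑ a, pol h s a *
              ∑ s', p h s a s' * (rA ^ 2 / (2 * lam) * Wrec p pol g n (h + 1) s') := by
        apply Finset.sum_le_sum
        intro a _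
        apply mul_le_mul_of_nonneg_left _ ((hpolmem h hh s).1 a)
        rw [h3 a]
        apply Finset.sum_le_sum
        intro s' _
        exact mul_le_mul_of_nonneg_left (ih (h + 1) s' (by omega)) (hp0 h s a s')
      have h7 : (∑ a, pol h s a *
            ∑ s', p h s a s' * (rA ^ 2 / (2 * lam) * Wrec p pol g n (h + 1) s'))
          = rA ^ 2 / (2 * lam) *
              ∑ a, pol h s a * ∑ s', p h s a s' * Wrec p pol g n (h + 1) s' := by
        rw [Finset.mul_sum]
        apply Finset.sum_congr rfl
        intro a _
        have e : (∑ s', p h s a s' * (rA ^ 2 / (2 * lam) * Wrec p pol g n (h + 1) s'))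
            = rA ^ 2 / (2 * lam) * ∑ s', p h s a s' * Wrec p pol g n (h + 1) s' := by
          rw [Finset.mul_sum]
          apply Finset.sum_congr rfl
          intro s' _
          ring
        rw [e]
        ring
      have hw : Wrec p pol g (n + 1) h s
          = g h s + ∑ a, pol h s a * ∑ s', p h s a s' * Wrec p pol g n (h + 1) s' := rfl
      rw [hw]
      rw [h7] at h6
      calc Vstar h s - Vpi h s
          ≤ rA ^ 2 / (2 * lam) * g h s + ∑ a, pol h s a * (Qstar h s a - Qpi h s a) := h5
        _ ≤ rA ^ 2 / (2 * lam) * g h s + rA ^ 2 / (2 * lam) *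
              ∑ a, pol h s a * ∑ s', p h s a s' * Wrec p pol g n (h + 1) s' := by linarith [h6]
        _ = rA ^ 2 / (2 * lam) *
              (g h s + ∑ a, pol h s a * ∑ s', p h s a s' * Wrec p pol g n (h + 1) s') := by
            ring
  rcases Nat.eq_zero_or_pos H with hH0 | hHpos
  · subst hH0
    have h1 : Vstar 0 s1 = 0 := hVstarH s1
    have h2 : Vpi 0 s1 = 0 := hVpiH s1
    rw [h1, h2]
    simp
  · have hgen := genE H p pol g hp1 (fun h hh s => (hpolmem h hh s).2) (H - 1) 0 s1 0
      (by omega)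
    have hHm : H - 1 + 1 = H := by omega
    rw [hHm] at hgen
    simp only [pow_zero, one_mul, zero_add, Nat.zero_le, if_true] at hgen
    calc Vstar 0 s1 - Vpi 0 s1
        ≤ rA ^ 2 / (2 * lam) * Wrec p pol g H 0 s1 := main H 0 s1 (by omega)
      _ = rA ^ 2 / (2 * lam) *
            ∑ τ : Fin H → S × A, condProb H p pol 0 s1 τ * ∑ k : Fin H, g k (τ k).1 := by
          rw [hgen]
      _ = rA ^ 2 / (2 * lam) *
            ∑ τ : Fin H → S × A, condProb H p pol 0 s1 τ *
              ∑ k : Fin H, ⨆ a, (U k (τ k).1 a - Qstar k (τ k).1 a) ^ 2 := by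
          simp only [hg]
end

section
/- (Variance switch between functions) For a probability distribution p on a finite set and two functions f, g with values in [0,b], Var_p(f) ≤ 2 Var_p(g) + 2b · p|f − g|. Also, for two distributions p, q and f: S → [0,b], Var_q(f) ≤ Var_p(f) + 3b² ‖p − q‖₁. -/
open Real Finset

/-- Mean of `f` under `p`. -/
noncomputable def mean {X : Type*} [Fintype X] (p : X → ℝ) (f : X → ℝ) : ℝ :=
  ∑ x, p x * f x

/-- Variance of `f` under `p`. -/
noncomputable def var {X : Type*} [Fintype X] (p : X → ℝ) (f : X → ℝ) : ℝ :=
  ∑ x, p x * (f x - mean p f) ^ 2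

lemma sum_mul_sq_shift {X : Type*} [Fintype X] (p f : X → ℝ) (c : ℝ)
    (hp : ∑ x, p x = 1) :
    ∑ x, p x * (f x - c) ^ 2 = (∑ x, p x * f x ^ 2) - 2 * c * mean p f + c ^ 2 := by
  have h : ∑ x, p x * (f x - c) ^ 2
      = ∑ x, (p x * f x ^ 2 - 2 * c * (p x * f x) + c ^ 2 * p x) :=
    Finset.sum_congr rfl (fun x _ => by ring)
  rw [h, Finset.sum_add_distrib, Finset.sum_sub_distrib, ← Finset.mul_sum, ← Finset.mul_sum,
    hp, mean]
  ring

lemma var_le_shift {X : Type*} [Fintype X] (p f : X → ℝ) (c : ℝ)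
    (hp : ∑ x, p x = 1) :
    var p f ≤ ∑ x, p x * (f x - c) ^ 2 := by
  have h1 : var p f = (∑ x, p x * f x ^ 2) - 2 * mean p f * mean p f + mean p f ^ 2 := by
    rw [var]; exact sum_mul_sq_shift p f (mean p f) hp
  rw [h1, sum_mul_sq_shift p f c hp]
  nlinarith [sq_nonneg (mean p f - c)]

/-- Variance switch between functions: for a probability distribution `p` on a finite set
and functions `f, g` with values in `[0,b]`, `Var_p(f) ≤ 2 Var_p(g) + 2b·p|f−g|`; and for
two distributions `p, q` and `f : S → [0,b]`, `Var_q(f) ≤ Var_p(f) + 3b²‖p−q‖₁`. -/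
theorem variance_switch_functions {X : Type*} [Fintype X]
    (p q : X → ℝ) (hp : p ∈ stdSimplex ℝ X) (hq : q ∈ stdSimplex ℝ X)
    (b : ℝ) (f g : X → ℝ) (hf : ∀ x, f x ∈ Set.Icc 0 b) (hg : ∀ x, g x ∈ Set.Icc 0 b) :
    var p f ≤ 2 * var p g + 2 * b * mean p (fun x => |f x - g x|) ∧
    var q f ≤ var p f + 3 * b ^ 2 * ∑ x, |p x - q x| := by
  obtain ⟨hp0, hp1⟩ := hp
  obtain ⟨hq0, hq1⟩ := hq
  constructor
  · -- Part 1
    set μ := mean p g with hμ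
    have key : ∀ x, p x * (f x - μ) ^ 2
        ≤ 2 * (p x * (g x - μ) ^ 2) + 2 * b * (p x * |f x - g x|) := by
      intro x
      have hfx := hf x
      have hgx := hg x
      have habs : |f x - g x| ≤ b := by
        rw [abs_le]
        constructor <;> [linarith [hfx.1, hgx.2]; linarith [hfx.2, hgx.1]]
      have hsq : (f x - g x) ^ 2 ≤ b * |f x - g x| := by
        nlinarith [sq_abs (f x - g x), abs_nonneg (f x - g x)]
      have hpt : (f x - μ) ^ 2 ≤ 2 * (g x - μ) ^ 2 + 2 * b * |f x - g x| := by
        nlinarith [sq_nonneg (f x - g x - (g x - μ))]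
      nlinarith [hp0 x, mul_le_mul_of_nonneg_left hpt (hp0 x)]
    calc var p f ≤ ∑ x, p x * (f x - μ) ^ 2 := var_le_shift p f μ hp1
      _ ≤ ∑ x, (2 * (p x * (g x - μ) ^ 2) + 2 * b * (p x * |f x - g x|)) :=
          Finset.sum_le_sum (fun x _ => key x)
      _ = 2 * var p g + 2 * b * mean p (fun x => |f x - g x|) := by
          rw [Finset.sum_add_distrib, ← Finset.mul_sum, ← Finset.mul_sum]
          simp only [var, mean, hμ]
  · -- Part 2
    set μ := mean p f with hμ
    have hbnn : 0 ≤ b := by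
      have : Nonempty X := by
        by_contra h
        rw [not_nonempty_iff] at h
        simp [Finset.univ_eq_empty] at hp1
      obtain ⟨x⟩ := this
      exact le_trans (hf x).1 (hf x).2
    have hμ0 : 0 ≤ μ := Finset.sum_nonneg fun x _ => mul_nonneg (hp0 x) (hf x).1
    have hμb : μ ≤ b := by
      calc μ ≤ ∑ x, p x * b :=
          Finset.sum_le_sum fun x _ => mul_le_mul_of_nonneg_left (hf x).2 (hp0 x)
        _ = b := by rw [← Finset.sum_mul, hp1, one_mul]
    have hsq : ∀ x, (f x - μ) ^ 2 ≤ b ^ 2 := by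
      intro x
      have := hf x
      nlinarith [this.1, this.2]
    have key : ∀ x, q x * (f x - μ) ^ 2 ≤ p x * (f x - μ) ^ 2 + b ^ 2 * |p x - q x| := by
      intro x
      have h1 : q x - p x ≤ |p x - q x| := by
        rw [abs_sub_comm]; exact le_abs_self _
      nlinarith [hsq x, sq_nonneg (f x - μ), abs_nonneg (p x - q x)]
    have habsnn : 0 ≤ ∑ x, |p x - q x| := Finset.sum_nonneg fun x _ => abs_nonneg _
    calc var q f ≤ ∑ x, q x * (f x - μ) ^ 2 := var_le_shift q f μ hq1
      _ ≤ ∑ x, (p x * (f x - μ) ^ 2 + b ^ 2 * |p x - q x|) :=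
          Finset.sum_le_sum (fun x _ => key x)
      _ = var p f + b ^ 2 * ∑ x, |p x - q x| := by
          rw [Finset.sum_add_distrib, ← Finset.mul_sum, var]
      _ ≤ var p f + 3 * b ^ 2 * ∑ x, |p x - q x| := by
          nlinarith [sq_nonneg b]
end

section
/- For any T ∈ ℕ and any sequence (u_t)_{t≥1} with u_t ∈ [0,1], letting U_t = Σ_{ℓ=1}^t u_ℓ, it holds that Σ_{t=0}^T u_{t+1}/max(U_t, 1) ≤ 4 log(U_{T+1} + 1). -/
/-!
Each increment is charged to the potential `Φ(U) = 4 log (U + 1)`: since `u ≤ 1 ≤ max U 1`, we have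
`U + u + 1 ≤ 3 max U 1`, so `u / max U 1 ≤ 3 u / (U + u + 1) ≤ 3 (Φ(U + u) - Φ(U)) / 4`, using
`1 - x⁻¹ ≤ log x`. Summing, the potential differences telescope to `Φ(U_{T+1}) - Φ(0)`, and `Φ(0) = 0`.
-/

open Finset Real

lemma div_add_le_log_add_sub_log {a b : ℝ} (ha : 0 < a) (hb : 0 ≤ b) :
    b / (a + b) ≤ log (a + b) - log a := by
  have hab : 0 < a + b := by linarith
  calc b / (a + b) = 1 - ((a + b) / a)⁻¹ := by field_simp; ring
    _ ≤ log ((a + b) / a) := one_sub_inv_le_log_of_pos (by positivity)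
    _ = log (a + b) - log a := log_div hab.ne' ha.ne'

lemma div_max_one_le_three_mul_div {a b : ℝ} (ha : 0 ≤ a) (hb₀ : 0 ≤ b) (hb₁ : b ≤ 1) :
    b / max a 1 ≤ 3 * (b / (a + b + 1)) := by
  have hM : a + b + 1 ≤ 3 * max a 1 := by
    linarith [le_max_left a 1, le_max_right a 1]
  rw [mul_div_assoc', div_le_div_iff₀ (by positivity) (by positivity)]
  nlinarith

lemma div_max_one_le_four_mul_log_sub {a b : ℝ} (ha : 0 ≤ a) (hb₀ : 0 ≤ b) (hb₁ : b ≤ 1) :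
    b / max a 1 ≤ 4 * (log (a + b + 1) - log (a + 1)) := by
  have hlog := div_add_le_log_add_sub_log (by linarith : 0 < a + 1) hb₀
  rw [add_right_comm] at hlog
  have : 0 ≤ b / (a + b + 1) := by positivity
  linarith [div_max_one_le_three_mul_div ha hb₀ hb₁]

/-- Potential-function lemma: for any `T` and any sequence `(u_t)_{t≥1}` with `u_t ∈ [0,1]`,
letting `U_t = Σ_{ℓ=1}^t u_ℓ` (so `U_0 = 0`), we have
`Σ_{t=0}^T u_{t+1}/(U_t ∨ 1) ≤ 4 log(U_{T+1} + 1)`. -/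
theorem sum_increment_div_partial_sum_le (T : ℕ) (u : ℕ → ℝ)
    (hu : ∀ t, u t ∈ Set.Icc (0 : ℝ) 1) :
    (∑ t ∈ Finset.range (T + 1),
        u (t + 1) / max (∑ l ∈ Finset.range t, u (l + 1)) 1)
      ≤ 4 * Real.log ((∑ l ∈ Finset.range (T + 1), u (l + 1)) + 1) := by
  set U : ℕ → ℝ := fun t ↦ ∑ l ∈ range t, u (l + 1) with hU
  have hstep (t : ℕ) :
      u (t + 1) / max (U t) 1 ≤ 4 * (log (U (t + 1) + 1) - log (U t + 1)) := by
    simpa only [hU, sum_range_succ] using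
      div_max_one_le_four_mul_log_sub (sum_nonneg fun l _ ↦ (hu (l + 1)).1)
        (hu (t + 1)).1 (hu (t + 1)).2
  calc ∑ t ∈ range (T + 1), u (t + 1) / max (U t) 1
      ≤ ∑ t ∈ range (T + 1), 4 * (log (U (t + 1) + 1) - log (U t + 1)) :=
        sum_le_sum fun t _ ↦ hstep t
    _ = 4 * log (U (T + 1) + 1) := by
        rw [← mul_sum, sum_range_sub (fun t ↦ log (U t + 1))]
        simp [hU]
end

section
/- (Counts versus pseudo-counts) Suppose that for all t, n_t ≥ (1/2) n̄_t − β₀ where n̄_t = n_t^{prior} form pseudo-counts (formally: on an event where n_t ≥ n̄_t/2 − β₀ with β₀ ≥ 1), and let β(x) be a nonnegative nondecreasing function such that x ↦ β(x)/x is nonincreasing for x ≥ 1. Then for all t, min(β(n_t)/n_t, 1) ≤ 4 β(n̄_t)/max(n̄_t, 1). -/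
open Real Finset

/-- Counts versus pseudo-counts: if the counts `n_t` satisfy `n_t ≥ n̄_t/2 − β₀` for
pseudo-counts `n̄_t ≥ 0` and some `β₀ ≥ 1`, and `β` is a nonnegative nondecreasing function
with `x ↦ β(x)/x` nonincreasing for `x ≥ 1` (and `β(x) ≥ β₀` for `x ≥ 0`), then
`min(β(n_t)/n_t, 1) ≤ 4 β(n̄_t)/(n̄_t ∨ 1)` for all `t`. -/
theorem counts_vs_pseudo_counts (n : ℕ → ℕ) (nbar : ℕ → ℝ) (beta : ℝ → ℝ) (beta0 : ℝ)
    (hbeta0 : 1 ≤ beta0)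
    (hnbar0 : ∀ t, 0 ≤ nbar t)
    (hcnt : ∀ t, (n t : ℝ) ≥ nbar t / 2 - beta0)
    (hbeta_nonneg : ∀ x, 0 ≤ beta x)
    (hbeta_mono : Monotone beta)
    (hbeta_ratio : ∀ x y : ℝ, 1 ≤ x → x ≤ y → beta y / y ≤ beta x / x)
    (hbeta_ge : ∀ x : ℝ, 0 ≤ x → beta0 ≤ beta x) :
    ∀ t, min (beta (n t) / (n t : ℝ)) 1 ≤ 4 * beta (nbar t) / max (nbar t) 1 := by
  intro t
  set m := nbar t with hm
  have hm0 : 0 ≤ m := hnbar0 t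
  have hb : beta0 ≤ beta m := hbeta_ge m hm0
  by_cases hc : m ≤ 4 * beta0
  · -- small case: RHS ≥ 1
    have hmax : max m 1 ≤ 4 * beta m := by
      rcases max_cases m 1 with ⟨h1, _⟩ | ⟨h1, _⟩ <;> rw [h1] <;> nlinarith
    have hmaxpos : (0:ℝ) < max m 1 := lt_of_lt_of_le zero_lt_one (le_max_right _ _)
    have : (1:ℝ) ≤ 4 * beta m / max m 1 := (one_le_div hmaxpos).2 hmax
    exact le_trans (min_le_right _ _) this
  · push_neg at hc
    have hm4 : (1:ℝ) < m / 4 := by linarith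
    have hN : (n t : ℝ) ≥ m / 4 := by
      have := hcnt t
      linarith
    have hratio := hbeta_ratio (m / 4) (n t) (le_of_lt hm4) hN
    have hmono : beta (m / 4) ≤ beta m := hbeta_mono (by linarith)
    have hmpos : (0:ℝ) < m := by linarith
    have hmax : max m 1 = m := max_eq_left (by linarith)
    rw [hmax]
    have h1 : beta (m / 4) / (m / 4) = 4 * beta (m / 4) / m := by
      field_simp
    calc min (beta (n t) / (n t : ℝ)) 1 ≤ beta (n t) / (n t : ℝ) := min_le_left _ _
      _ ≤ beta (m / 4) / (m / 4) := hratio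
      _ = 4 * beta (m / 4) / m := h1
      _ ≤ 4 * beta m / m := by gcongr
end

section
/- (Entropy estimation deviation) Let p ∈ Δ_{m−1} and p̂_n be the empirical distribution of n i.i.d. samples from p. Then for all δ ∈ (0,1], with probability at least 1 − δ, |H(p̂_n) − H(p)| ≤ √(2 log²(n) log(2/δ)/n) + min( ((m−1)log(e(1 + n/(m−1))) + 1)/n , log m ). -/
/-
The deviation splits as |H(p̂) − E H(p̂)| + |E H(p̂) − H(p)|.

Concentration: moving one sample moves mass 1/n between two cells of p̂, and on the grid ℕ/n the
function −y log y has increments at most log n / n, so H(p̂) has bounded differences 2 log n / n.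
McDiarmid's inequality (Hoeffding's lemma for the conditional increments of the Doob martingale,
by induction on the number of samples) gives the first term with probability ≥ 1 − δ.

Bias: cell by cell, Jensen gives E[−p̂ log p̂] ≤ −p log p, and y log y ≤ y log p + y (y/p − 1)
gives −p log p − E[−p̂ log p̂] ≤ Var(p̂)/p = (1 − p)/n; summing, 0 ≤ H(p) − E H(p̂) ≤ (m − 1)/n,
which is below the first argument of the min. The second argument, log m, bounds the deviation
outright since both entropies lie in [0, log m].
-/

open Real Finset
open scoped Classical

/-- Empirical distribution of the sample `ω = (ω_1, …, ω_n)`. -/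
noncomputable def empDist {n m : ℕ} (ω : Fin n → Fin m) (k : Fin m) : ℝ :=
  ((Finset.univ.filter (fun i : Fin n => ω i = k)).card : ℝ) / n

open ProbabilityTheory MeasureTheory in
theorem sum_mul_exp_le_of_forall_sub_le {κ : Type*} [Fintype κ] {q X : κ → ℝ}
    (hq0 : ∀ x, 0 ≤ q x) (hq1 : ∑ x, q x = 1) {c : ℝ} (hX : ∀ x y, X x - X y ≤ c) (t : ℝ) :
    ∑ x, q x * exp (t * (X x - ∑ y, q y * X y)) ≤ exp (t ^ 2 * c ^ 2 / 8) := by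
  let _ : MeasurableSpace κ := ⊤
  have : Nonempty κ := by
    by_contra h
    simp [not_nonempty_iff.1 h] at hq1
  obtain ⟨x₀, -, hx₀⟩ := exists_min_image univ X univ_nonempty
  let P : PMF κ := PMF.ofFintype (fun x => ENNReal.ofReal (q x)) (by
    rw [← ENNReal.ofReal_sum_of_nonneg (fun x _ => hq0 x), hq1, ENNReal.ofReal_one])
  have hP (f : κ → ℝ) : ∫ x, f x ∂P.toMeasure = ∑ x, q x * f x := by
    simp [PMF.integral_eq_sum, P, ENNReal.toReal_ofReal (hq0 _)]
  have hc : 0 ≤ c := by simpa using hX x₀ x₀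
  have hsg := hasSubgaussianMGF_of_mem_Icc (μ := P.toMeasure) (a := X x₀) (b := X x₀ + c)
    (by fun_prop) (ae_of_all _ fun x => ⟨hx₀ x (mem_univ x), by linarith [hX x x₀]⟩)
  calc _ = mgf (fun x => X x - ∫ y, X y ∂P.toMeasure) P.toMeasure t := by simp only [mgf, hP]
    _ ≤ _ := hsg.mgf_le t
    _ = _ := by simp [abs_of_nonneg hc]; ring

theorem sum_mul_negMulLog_le_negMulLog_sum {α : Type*} [Fintype α] {w Y : α → ℝ}
    (hw0 : ∀ a, 0 ≤ w a) (hw1 : ∑ a, w a = 1) (hY : ∀ a, 0 ≤ Y a) :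
    ∑ a, w a * negMulLog (Y a) ≤ negMulLog (∑ a, w a * Y a) :=
  concaveOn_negMulLog.le_map_sum (fun a _ => hw0 a) hw1 (fun a _ => hY a)

theorem negMulLog_sum_sub_sum_mul_negMulLog_le {α : Type*} [Fintype α] {w Y : α → ℝ}
    (hw0 : ∀ a, 0 ≤ w a) (hY : ∀ a, 0 ≤ Y a) :
    negMulLog (∑ a, w a * Y a) - ∑ a, w a * negMulLog (Y a)
      ≤ (∑ a, w a * Y a ^ 2 - (∑ a, w a * Y a) ^ 2) / ∑ a, w a * Y a := by
  set μ := ∑ a, w a * Y a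
  rcases (show 0 ≤ μ from sum_nonneg fun a _ => mul_nonneg (hw0 a) (hY a)).eq_or_lt with hμ | hμ
  · have hwY (a : α) : w a * Y a = 0 :=
      (sum_eq_zero_iff_of_nonneg fun a _ => mul_nonneg (hw0 a) (hY a)).1 hμ.symm a (mem_univ a)
    simp [← hμ, negMulLog, ← mul_assoc, hwY]
  · have hpt (a : α) : Y a * log (Y a) ≤ Y a * log μ + Y a * (Y a / μ - 1) := by
      rcases (hY a).eq_or_lt with h | h
      · simp [← h]
      · have := log_le_sub_one_of_pos (div_pos h hμ)
        rw [log_div h.ne' hμ.ne'] at this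
        nlinarith
    have hsum : ∑ a, w a * (Y a * log (Y a)) ≤ μ * log μ + (∑ a, w a * Y a ^ 2) / μ - μ := calc
      _ ≤ ∑ a, (w a * Y a * log μ + w a * Y a ^ 2 / μ - w a * Y a) :=
        sum_le_sum fun a _ => (mul_le_mul_of_nonneg_left (hpt a) (hw0 a)).trans_eq (by ring)
      _ = _ := by rw [sum_sub_distrib, sum_add_distrib, ← sum_mul, ← sum_div]
    rw [sub_div, sq, mul_self_div_self]
    simp only [negMulLog, neg_mul, mul_neg, sum_neg_distrib]
    linarith

theorem mul_log_le_add_one_mul_log_add_one {a : ℝ} (ha : 0 ≤ a) :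
    a * log a ≤ (a + 1) * log (a + 1) := by
  rcases le_total a 1 with h | h
  · exact (mul_log_nonpos ha h).trans (mul_log_nonneg (by linarith))
  · exact mul_le_mul (by linarith) (log_le_log (by linarith) (by linarith))
      (log_nonneg h) (by linarith)

theorem sub_one_mul_log_add_one_le_mul_log {a : ℝ} (ha : 1 ≤ a) :
    (a - 1) * log (a + 1) ≤ a * log a := by
  have hJ := strictConcaveOn_log_Ioi.concaveOn.2 (show a + 1 ∈ Set.Ioi 0 by
    simp only [Set.mem_Ioi]; linarith) (show (1 : ℝ) ∈ Set.Ioi 0 by norm_num)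
    (show 0 ≤ (a - 1) / a from div_nonneg (by linarith) (by linarith))
    (show 0 ≤ 1 / a by positivity) (by field_simp; ring)
  have harg : ((a - 1) / a) • (a + 1) + (1 / a) • (1 : ℝ) = a := by
    simp only [smul_eq_mul]; field_simp; ring
  rw [harg, log_one, smul_eq_mul, smul_eq_mul, mul_zero, add_zero] at hJ
  calc (a - 1) * log (a + 1) = a * ((a - 1) / a * log (a + 1)) := by field_simp
    _ ≤ a * log a := by gcongr

theorem abs_negMulLog_succ_div_sub_le {a n : ℕ} (h : a + 1 ≤ n) :
    |negMulLog ((a + 1 : ℕ) / n) - negMulLog (a / n)| ≤ log n / n := by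
  have hn : (0 : ℝ) < n := by exact_mod_cast (Nat.succ_pos a).trans_le h
  have hscale (x : ℝ) : negMulLog (x / n) = (negMulLog x + x * log n) / n := by
    rw [div_eq_mul_inv, negMulLog_mul]
    simp only [negMulLog, log_inv]
    ring
  have hlog : log (a + 1 : ℕ) ≤ log n := log_le_log (by positivity) (by exact_mod_cast h)
  have hlow := mul_log_le_add_one_mul_log_add_one (Nat.cast_nonneg a : (0 : ℝ) ≤ a)
  have hup : ((a : ℝ) + 1) * log (a + 1) - a * log a ≤ 2 * log (a + 1) := by
    rcases Nat.eq_zero_or_pos a with rfl | ha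
    · simp
    · linarith [sub_one_mul_log_add_one_le_mul_log (by exact_mod_cast ha : (1 : ℝ) ≤ a)]
  -- `n` times the difference is `log n - ((a + 1) log (a + 1) - a log a)`, and the bracket lies
  -- in `[0, 2 log n]`.
  rw [hscale, hscale, ← sub_div, abs_div, abs_of_pos hn]
  gcongr
  push_cast at hlog ⊢
  rw [abs_le]
  constructor <;> simp only [negMulLog] <;> linarith

theorem abs_negMulLog_div_sub_le {a b n : ℕ} (hab : a ≤ b + 1) (hba : b ≤ a + 1) (ha : a ≤ n)
    (hb : b ≤ n) : |negMulLog (a / n) - negMulLog (b / n)| ≤ log n / n := by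
  rcases (show a = b ∨ a = b + 1 ∨ b = a + 1 by omega) with rfl | rfl | rfl
  · simp only [sub_self, abs_zero]; positivity
  · exact abs_negMulLog_succ_div_sub_le ha
  · exact abs_sub_comm (negMulLog (a / n)) _ ▸ abs_negMulLog_succ_div_sub_le hb

section iid

variable {κ : Type*} [Fintype κ] {n : ℕ} {q : κ → ℝ}

noncomputable def iidExpect (q : κ → ℝ) (f : (Fin n → κ) → ℝ) : ℝ :=
  ∑ ω, (∏ i, q (ω i)) * f ω

theorem iidExpect_add (f g : (Fin n → κ) → ℝ) :
    iidExpect q (fun ω => f ω + g ω) = iidExpect q f + iidExpect q g := by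
  simp only [iidExpect, mul_add, sum_add_distrib]

theorem iidExpect_const_mul (a : ℝ) (f : (Fin n → κ) → ℝ) :
    iidExpect q (fun ω => a * f ω) = a * iidExpect q f := by
  simp only [iidExpect, mul_sum, mul_left_comm]

theorem iidExpect_sum {ι : Type*} (s : Finset ι) (f : ι → (Fin n → κ) → ℝ) :
    iidExpect q (fun ω => ∑ k ∈ s, f k ω) = ∑ k ∈ s, iidExpect q (f k) := by
  simp only [iidExpect, mul_sum]
  exact sum_comm

theorem iidExpect_const (hq1 : ∑ x, q x = 1) (a : ℝ) :
    iidExpect q (fun _ : Fin n → κ => a) = a := by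
  rw [iidExpect, ← sum_mul, ← Fintype.sum_pow, hq1, one_pow, one_mul]

theorem iidExpect_mono (hq0 : ∀ x, 0 ≤ q x) {f g : (Fin n → κ) → ℝ} (h : ∀ ω, f ω ≤ g ω) :
    iidExpect q f ≤ iidExpect q g :=
  sum_le_sum fun ω _ => mul_le_mul_of_nonneg_left (h ω) (prod_nonneg fun _ _ => hq0 _)

theorem iidExpect_succ (f : (Fin (n + 1) → κ) → ℝ) :
    iidExpect q f = iidExpect q (fun τ => ∑ x, q x * f (Fin.cons x τ)) := by
  rw [iidExpect, ← (Fin.consEquiv fun _ => κ).sum_comp, Fintype.sum_prod_type, sum_comm]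
  simp only [iidExpect, mul_sum]
  refine sum_congr rfl fun τ _ => sum_congr rfl fun x _ => ?_
  simp only [Fin.consEquiv, Equiv.coe_fn_mk, Fin.prod_univ_succ, Fin.cons_zero, Fin.cons_succ]
  ring

theorem iidExpect_exp_mul_sub_le_of_bounded_differences (hq0 : ∀ x, 0 ≤ q x)
    (hq1 : ∑ x, q x = 1) {f : (Fin n → κ) → ℝ} {c : ℝ}
    (hf : ∀ ω i x, |f (Function.update ω i x) - f ω| ≤ c) (t : ℝ) :
    iidExpect q (fun ω => exp (t * (f ω - iidExpect q f))) ≤ exp (t ^ 2 * n * c ^ 2 / 8) := by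
  induction n with
  | zero =>
    have hf : ∀ ω, f ω = iidExpect q f := fun ω => by
      rw [← iidExpect_const hq1 (f ω)]; congr 1; funext τ; rw [Subsingleton.elim τ ω]
    simp [hf, iidExpect_const hq1]
  | succ n ih =>
    -- `g` averages out the first sample; given the others, `f - g` is centred with range `≤ c`,
    -- so Hoeffding's lemma bounds the inner average and the induction hypothesis applies to `g`.
    set g : (Fin n → κ) → ℝ := fun τ => ∑ x, q x * f (Fin.cons x τ)
    have hEf : iidExpect q f = iidExpect q g := iidExpect_succ f
    have hg : ∀ τ i y, |g (Function.update τ i y) - g τ| ≤ c := fun τ i y => by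
      simp only [g, ← sum_sub_distrib, ← mul_sub]
      calc _ ≤ ∑ x, |q x * (f (Fin.cons x (Function.update τ i y)) - f (Fin.cons x τ))| :=
            abs_sum_le_sum_abs _ _
        _ ≤ ∑ x, q x * c := sum_le_sum fun x _ => by
            rw [abs_mul, abs_of_nonneg (hq0 x), Fin.cons_update]
            exact mul_le_mul_of_nonneg_left (hf _ _ _) (hq0 x)
        _ = c := by rw [← sum_mul, hq1, one_mul]
    have hinner (τ : Fin n → κ) :
        ∑ x, q x * exp (t * (f (Fin.cons x τ) - g τ)) ≤ exp (t ^ 2 * c ^ 2 / 8) :=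
      sum_mul_exp_le_of_forall_sub_le hq0 hq1 (fun x y => by
        simpa [Fin.update_cons_zero] using (abs_le.1 (hf (Fin.cons y τ) 0 x)).2) t
    calc _ = iidExpect q (fun τ => exp (t * (g τ - iidExpect q g)) *
            ∑ x, q x * exp (t * (f (Fin.cons x τ) - g τ))) := by
          rw [iidExpect_succ, hEf]
          congr 1; funext τ
          rw [mul_sum]
          refine sum_congr rfl fun x _ => ?_
          rw [mul_left_comm, ← exp_add]
          ring_nf
      _ ≤ iidExpect q (fun τ => exp (t ^ 2 * c ^ 2 / 8) * exp (t * (g τ - iidExpect q g))) :=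
          iidExpect_mono hq0 fun τ => by
            rw [mul_comm]; exact mul_le_mul_of_nonneg_right (hinner τ) (exp_nonneg _)
      _ ≤ exp (t ^ 2 * c ^ 2 / 8) * exp (t ^ 2 * n * c ^ 2 / 8) := by
          rw [iidExpect_const_mul]
          exact mul_le_mul_of_nonneg_left (ih hg) (exp_nonneg _)
      _ = exp (t ^ 2 * (n + 1 : ℕ) * c ^ 2 / 8) := by rw [← exp_add]; push_cast; ring_nf

theorem iidExpect_tail_le_of_bounded_differences (hq0 : ∀ x, 0 ≤ q x)
    (hq1 : ∑ x, q x = 1) {f : (Fin n → κ) → ℝ} {c : ℝ}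
    (hf : ∀ ω i x, |f (Function.update ω i x) - f ω| ≤ c) {s : ℝ} (hs : 0 ≤ s)
    (hnc : 0 < n * c ^ 2) :
    iidExpect q (fun ω => if s ≤ |f ω - iidExpect q f| then 1 else 0)
      ≤ 2 * exp (-2 * s ^ 2 / (n * c ^ 2)) := by
  set t := 4 * s / (n * c ^ 2)
  have ht : 0 ≤ t := by positivity
  have hmgf (u : ℝ) := iidExpect_exp_mul_sub_le_of_bounded_differences hq0 hq1 hf u
  have hchernoff (y : ℝ) :
      (if s ≤ |y| then 1 else 0) ≤ exp (-(t * s)) * (exp (t * y) + exp (-t * y)) := by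
    rw [mul_add, ← exp_add, ← exp_add]
    split_ifs with hy
    · rcases le_abs'.1 hy with hy | hy
      · linarith [one_le_exp (by nlinarith : 0 ≤ -(t * s) + -t * y), exp_nonneg (-(t * s) + t * y)]
      · linarith [one_le_exp (by nlinarith : 0 ≤ -(t * s) + t * y), exp_nonneg (-(t * s) + -t * y)]
    · positivity
  calc _ ≤ iidExpect q (fun ω => exp (-(t * s)) * (exp (t * (f ω - iidExpect q f))
        + exp (-t * (f ω - iidExpect q f)))) := iidExpect_mono hq0 fun ω => hchernoff _
    _ ≤ exp (-(t * s)) * (exp (t ^ 2 * n * c ^ 2 / 8) + exp ((-t) ^ 2 * n * c ^ 2 / 8)) := by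
      rw [iidExpect_const_mul, iidExpect_add]
      gcongr <;> apply hmgf
    _ = 2 * exp (-2 * s ^ 2 / (n * c ^ 2)) := by
      rw [neg_sq, ← two_mul, mul_left_comm, ← exp_add]
      congr 2
      simp only [t]
      field_simp
      ring

theorem iidExpect_sum_comp (hq1 : ∑ x, q x = 1) (h : κ → ℝ) :
    iidExpect q (fun ω : Fin n → κ => ∑ i, h (ω i)) = n * ∑ x, q x * h x := by
  induction n with
  | zero => simp [iidExpect_const hq1]
  | succ n ih =>
    rw [iidExpect_succ]
    simp only [Fin.sum_univ_succ, Fin.cons_zero, Fin.cons_succ, mul_add, sum_add_distrib,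
      ← sum_mul, hq1, one_mul]
    rw [iidExpect_add, iidExpect_const hq1, ih]
    push_cast
    ring

theorem iidExpect_sum_comp_sq (hq1 : ∑ x, q x = 1) (h : κ → ℝ) :
    iidExpect q (fun ω : Fin n → κ => (∑ i, h (ω i)) ^ 2)
      = n * ∑ x, q x * h x ^ 2 + n * (n - 1) * (∑ x, q x * h x) ^ 2 := by
  induction n with
  | zero => simp [iidExpect_const hq1]
  | succ n ih =>
    have hexpand (τ : Fin n → κ) :
        ∑ x, q x * (∑ i : Fin (n + 1), h ((Fin.cons x τ : Fin (n + 1) → κ) i)) ^ 2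
          = ∑ x, q x * h x ^ 2 + (2 * ∑ x, q x * h x) * ∑ i, h (τ i) + (∑ i, h (τ i)) ^ 2 := by
      simp only [Fin.sum_univ_succ, Fin.cons_zero, Fin.cons_succ, add_sq, mul_add, sum_add_distrib,
        ← sum_mul, hq1, one_mul]
      ring_nf
      simp only [← sum_mul]
      ring
    rw [iidExpect_succ]
    simp only [hexpand]
    rw [iidExpect_add, iidExpect_add, iidExpect_const hq1, iidExpect_const_mul,
      iidExpect_sum_comp hq1, ih]
    push_cast
    ring

end iid

theorem entropy_eq_sum_negMulLog {X : Type*} [Fintype X] (d : X → ℝ) :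
    entropy d = ∑ x, negMulLog (d x) := by
  simp [entropy, negMulLog, sum_neg_distrib]

theorem entropy_nonneg {X : Type*} [Fintype X] {d : X → ℝ} (h0 : ∀ x, 0 ≤ d x)
    (h1 : ∑ x, d x = 1) : 0 ≤ entropy d := by
  rw [entropy_eq_sum_negMulLog]
  exact sum_nonneg fun x _ =>
    negMulLog_nonneg (h0 x) (h1 ▸ single_le_sum (fun y _ => h0 y) (mem_univ x))

theorem entropy_le_log_card {X : Type*} [Fintype X] {d : X → ℝ} (h0 : ∀ x, 0 ≤ d x)
    (h1 : ∑ x, d x = 1) : entropy d ≤ log (Fintype.card X) := by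
  have : Nonempty X := by
    by_contra h
    simp [not_nonempty_iff.1 h] at h1
  have hX : (0 : ℝ) < Fintype.card X := by exact_mod_cast Fintype.card_pos
  have hJ := concaveOn_negMulLog.le_map_sum (t := univ) (w := fun _ => (Fintype.card X : ℝ)⁻¹)
    (fun _ _ => by positivity) (by simp [hX.ne']) (fun x _ => h0 x)
  simp only [smul_eq_mul, ← mul_sum, h1, mul_one, negMulLog, log_inv] at hJ
  rw [entropy_eq_sum_negMulLog]
  refine le_of_mul_le_mul_left ?_ (inv_pos.2 hX)
  simpa [negMulLog] using hJ

theorem abs_entropy_sub_entropy_le_log_card {X : Type*} [Fintype X] {d d' : X → ℝ}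
    (hd0 : ∀ x, 0 ≤ d x) (hd1 : ∑ x, d x = 1) (hd'0 : ∀ x, 0 ≤ d' x) (hd'1 : ∑ x, d' x = 1) :
    |entropy d - entropy d'| ≤ log (Fintype.card X) :=
  abs_sub_le_iff.2 ⟨by linarith [entropy_le_log_card hd0 hd1, entropy_nonneg hd'0 hd'1],
    by linarith [entropy_le_log_card hd'0 hd'1, entropy_nonneg hd0 hd1]⟩

theorem card_filter_update_add {κ : Type*} [DecidableEq κ] {n : ℕ} (ω : Fin n → κ) (i : Fin n)
    (x k : κ) :
    #{j | Function.update ω i x j = k} + (if ω i = k then 1 else 0)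
      = #{j | ω j = k} + (if x = k then 1 else 0) := by
  simp only [card_filter]
  rw [← add_sum_erase _ _ (mem_univ i), ← add_sum_erase _ (fun j => if ω j = k then 1 else 0)
    (mem_univ i), sum_congr rfl fun j hj => by rw [Function.update_of_ne (ne_of_mem_erase hj)]]
  simp only [Function.update_self]
  ring

section empirical

variable {n m : ℕ}

theorem empDist_nonneg (ω : Fin n → Fin m) (k : Fin m) : 0 ≤ empDist ω k := by
  unfold empDist; positivity

theorem sum_empDist (hn : n ≠ 0) (ω : Fin n → Fin m) : ∑ k, empDist ω k = 1 := by
  simp only [empDist, ← sum_div, ← Nat.cast_sum]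
  rw [← card_eq_sum_card_fiberwise fun i _ => mem_univ (ω i), card_univ, Fintype.card_fin]
  field_simp

theorem abs_entropy_empDist_update_sub_le (ω : Fin n → Fin m) (i : Fin n) (x : Fin m) :
    |entropy (empDist (Function.update ω i x)) - entropy (empDist ω)| ≤ 2 * log n / n := by
  have hcount := card_filter_update_add ω i x
  have hstep (k : Fin m) : |negMulLog (empDist (Function.update ω i x) k)
      - negMulLog (empDist ω k)| ≤ log n / n := by
    have := hcount k
    exact abs_negMulLog_div_sub_le (by split_ifs at this <;> omega)
      (by split_ifs at this <;> omega) (card_finset_fin_le _) (card_finset_fin_le _)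
  have hzero (k : Fin m) (hk : k ∉ ({x, ω i} : Finset (Fin m))) :
      negMulLog (empDist (Function.update ω i x) k) - negMulLog (empDist ω k) = 0 := by
    have := hcount k
    simp only [mem_insert, mem_singleton, not_or] at hk
    simp only [Ne.symm hk.1, Ne.symm hk.2, if_false, add_zero] at this
    rw [empDist, empDist, this, sub_self]
  rw [entropy_eq_sum_negMulLog, entropy_eq_sum_negMulLog, ← sum_sub_distrib,
    ← sum_subset (subset_univ {x, ω i}) fun k _ hk => hzero k hk]
  calc _ ≤ ∑ k ∈ {x, ω i}, |negMulLog (empDist (Function.update ω i x) k)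
        - negMulLog (empDist ω k)| := abs_sum_le_sum_abs _ _
    _ ≤ #{x, ω i} • (log n / n) := sum_le_card_nsmul _ _ _ fun k _ => hstep k
    _ ≤ 2 * log n / n := by
      rw [nsmul_eq_mul, mul_div_assoc]
      exact mul_le_mul_of_nonneg_right (by exact_mod_cast card_le_two)
        (div_nonneg (log_natCast_nonneg n) (Nat.cast_nonneg n))

theorem empDist_eq_sum_div (ω : Fin n → Fin m) (k : Fin m) :
    empDist ω k = (1 / n : ℝ) * ∑ i, (if ω i = k then 1 else 0) := by
  rw [empDist, natCast_card_filter, one_div_mul_eq_div]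

variable {p : Fin m → ℝ}

theorem iidExpect_empDist (hp1 : ∑ k, p k = 1) (hn : n ≠ 0) (k : Fin m) :
    iidExpect p (fun ω : Fin n → Fin m => empDist ω k) = p k := by
  simp only [empDist_eq_sum_div]
  rw [iidExpect_const_mul, iidExpect_sum_comp hp1 (fun x => if x = k then 1 else 0)]
  simp [hn]

theorem iidExpect_empDist_sq (hp1 : ∑ k, p k = 1) (hn : n ≠ 0) (k : Fin m) :
    iidExpect p (fun ω : Fin n → Fin m => empDist ω k ^ 2) = p k ^ 2 + p k * (1 - p k) / n := by
  simp only [empDist_eq_sum_div, mul_pow]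
  rw [iidExpect_const_mul, iidExpect_sum_comp_sq hp1 (fun x => if x = k then 1 else 0)]
  simp only [ite_pow, one_pow, zero_pow two_ne_zero, mul_ite, mul_one, mul_zero, sum_ite_eq',
    mem_univ, if_true]
  field_simp
  ring

theorem abs_iidExpect_entropy_empDist_sub_le (hp : p ∈ stdSimplex ℝ (Fin m)) (hn : n ≠ 0) :
    |iidExpect p (fun ω : Fin n → Fin m => entropy (empDist ω)) - entropy p| ≤ (m - 1) / n := by
  have hw0 (ω : Fin n → Fin m) : 0 ≤ ∏ i, p (ω i) := prod_nonneg fun i _ => hp.1 _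
  have hw1 : ∑ ω : Fin n → Fin m, ∏ i, p (ω i) = 1 := by
    simpa [iidExpect] using iidExpect_const (n := n) hp.2 1
  have hbound (k : Fin m) :
      0 ≤ negMulLog (p k) - iidExpect p (fun ω : Fin n → Fin m => negMulLog (empDist ω k))
        ∧ negMulLog (p k) - iidExpect p (fun ω : Fin n → Fin m => negMulLog (empDist ω k))
          ≤ (1 - p k) / n := by
    have hmean := iidExpect_empDist hp.2 hn k
    have hsq := iidExpect_empDist_sq hp.2 hn k
    unfold iidExpect at hmean hsq ⊢
    constructor
    · have := sum_mul_negMulLog_le_negMulLog_sum hw0 hw1 (fun ω => empDist_nonneg ω k)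
      rw [hmean] at this
      linarith
    · have := negMulLog_sum_sub_sum_mul_negMulLog_le hw0 (fun ω => empDist_nonneg ω k)
      rw [hmean, hsq, add_sub_cancel_left] at this
      refine this.trans ?_
      rcases (hp.1 k).eq_or_lt with hpk | hpk
      · simp [← hpk]
      · rw [mul_div_assoc, mul_div_cancel_left₀ _ hpk.ne']
  simp only [entropy_eq_sum_negMulLog]
  rw [iidExpect_sum, abs_sub_comm, ← sum_sub_distrib]
  have hupper : ∑ k, (negMulLog (p k)
      - iidExpect p (fun ω : Fin n → Fin m => negMulLog (empDist ω k))) ≤ (m - 1) / n := calc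
    _ ≤ ∑ k, (1 - p k) / n := sum_le_sum fun k _ => (hbound k).2
    _ = (m - 1) / n := by rw [← sum_div, sum_sub_distrib, hp.2]; simp
  exact abs_le.2 ⟨by linarith [sum_nonneg fun k (_ : k ∈ univ) => (hbound k).1], hupper⟩

end empirical

theorem sub_one_div_le_kl_bound {m : ℕ} (hm : 1 ≤ m) (n : ℕ) :
    ((m : ℝ) - 1) / n ≤ (((m : ℝ) - 1) * log (exp 1 * (1 + n / ((m : ℝ) - 1))) + 1) / n := by
  have hm1 : (0 : ℝ) ≤ m - 1 := by simp [hm]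
  have hx : (0 : ℝ) ≤ n / ((m : ℝ) - 1) := div_nonneg (Nat.cast_nonneg n) hm1
  have hlog : 1 ≤ log (exp 1 * (1 + n / ((m : ℝ) - 1))) := by
    rw [log_mul (exp_ne_zero 1) (by positivity), log_exp]
    linarith [log_nonneg (by linarith : (1 : ℝ) ≤ 1 + n / ((m : ℝ) - 1))]
  exact div_le_div_of_nonneg_right (by nlinarith) (Nat.cast_nonneg n)

theorem entropy_empDist_concentration {n m : ℕ} {p : Fin m → ℝ} (hp : p ∈ stdSimplex ℝ (Fin m))
    (hn : 2 ≤ n) {δ : ℝ} (hδ0 : 0 < δ) (hδ2 : δ ≤ 2) :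
    iidExpect p (fun ω : Fin n → Fin m =>
      if √(2 * log n ^ 2 * log (2 / δ) / n)
          ≤ |entropy (empDist ω) - iidExpect p (fun ω : Fin n → Fin m => entropy (empDist ω))|
        then 1 else 0)
      ≤ δ := by
  have hlogn : 0 < log n := log_pos (by exact_mod_cast hn)
  have hL : 0 ≤ log (2 / δ) := log_nonneg (by rw [le_div_iff₀ hδ0]; linarith)
  calc _ ≤ 2 * exp (-2 * √(2 * log n ^ 2 * log (2 / δ) / n) ^ 2 / (n * (2 * log n / n) ^ 2)) :=
        iidExpect_tail_le_of_bounded_differences hp.1 hp.2 abs_entropy_empDist_update_sub_le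
          (sqrt_nonneg _) (by positivity)
    _ = δ := by
      rw [sq_sqrt (by positivity)]
      field_simp
      rw [exp_neg, exp_log (div_pos two_pos hδ0)]
      field_simp

/-- Entropy estimation deviation: if `p̂_n` is the empirical distribution of `n` i.i.d.
samples from `p ∈ Δ_{m−1}` (the sample space being `(Fin m)^n` with the i.i.d. product
probabilities `∏ᵢ p(ωᵢ)`), then with probability at least `1 − δ`,
`|H(p̂_n) − H(p)| ≤ √(2 log²(n) log(2/δ)/n)
  + min(((m−1)·log(e(1 + n/(m−1))) + 1)/n, log m)`. -/
theorem entropy_estimation_deviation (n m : ℕ) (hn : 1 ≤ n) (hm : 1 ≤ m)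
    (p : Fin m → ℝ) (hp : p ∈ stdSimplex ℝ (Fin m)) (δ : ℝ) (hδ : δ ∈ Set.Ioc (0:ℝ) 1) :
    (∑ ω : Fin n → Fin m,
        if ¬ (|entropy (empDist ω) - entropy p|
            ≤ Real.sqrt (2 * Real.log n ^ 2 * Real.log (2 / δ) / n)
              + min ((((m : ℝ) - 1) * Real.log (Real.exp 1 * (1 + n / ((m : ℝ) - 1))) + 1) / n)
                  (Real.log m))
        then ∏ i, p (ω i) else 0)
      ≤ δ := by
  set s := Real.sqrt (2 * Real.log n ^ 2 * Real.log (2 / δ) / n)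
  set T := (((m : ℝ) - 1) * Real.log (Real.exp 1 * (1 + n / ((m : ℝ) - 1))) + 1) / n
  set EH := iidExpect p fun ω : Fin n → Fin m => entropy (empDist ω)
  have hs : 0 ≤ s := sqrt_nonneg _
  have hbias : |EH - entropy p| ≤ T :=
    (abs_iidExpect_entropy_empDist_sub_le hp (by omega)).trans (sub_one_div_le_kl_bound hm n)
  have hrange (ω : Fin n → Fin m) : |entropy (empDist ω) - entropy p| ≤ log m := by
    simpa using abs_entropy_sub_entropy_le_log_card (empDist_nonneg ω) (sum_empDist (by omega) ω)
      hp.1 hp.2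
  rcases hn.eq_or_lt with rfl | hn2
  -- For a single sample `s = 0`, but then `log m ≤ m - 1 ≤ T`, so no sample is bad.
  · refine (sum_eq_zero fun ω _ => if_neg (not_not_intro ?_)).trans_le hδ.1.le
    have hlogm : log m ≤ T := calc
      log m ≤ m - 1 := by linarith [log_le_sub_one_of_pos (by positivity : (0 : ℝ) < m)]
      _ = (m - 1) / (1 : ℕ) := by simp
      _ ≤ T := sub_one_div_le_kl_bound hm 1
    exact (le_min ((hrange ω).trans hlogm) (hrange ω)).trans (le_add_of_nonneg_left hs)
  · refine le_trans (sum_le_sum fun ω _ => ?_)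
      (entropy_empDist_concentration hp hn2 hδ.1 (by linarith [hδ.2]))
    rw [mul_ite, mul_one, mul_zero]
    by_cases hd : s ≤ |entropy (empDist ω) - EH|
    · rw [if_pos hd]
      split_ifs
      exacts [prod_nonneg fun _ _ => hp.1 _, le_rfl]
    · refine (if_neg (not_not_intro ?_)).trans_le (if_neg hd).ge
      rw [← min_add_add_left]
      exact le_min (by linarith [abs_sub_le (entropy (empDist ω)) EH (entropy p)])
        (by linarith [hrange ω])
end
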